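/- arXiv:2512.09719 — 6 statements merged into one kernel-verified Lean document; each statement's English description precedes it below -/
import Mathlib

section
/- Fix γ ∈ (1,∞). Let h be an admissible monotone pressure for exponent γ, let q : [0,∞) → ℝ be globally Lipschitz with q(0) = 0, and set p := h + q and W(r) := r ∫₁^r p(z)/z² dz for r > 0. Then there exist positive constants c₁, c₂, c₃ > 0 such that for every r > 0 the inequalities r^γ ≤ c₁ + c₂ · W(r) and W(r) ≤ c₃ · (1 + r^γ) hold. -/
open Filter Set MeasureTheory intervalIntegral

/-- Eventually a linear function is below `α * z ^ γ`. -/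
lemma aux_linear_le_rpow (γ : ℝ) (hγ : 1 < γ) (α : ℝ) (hα : 0 < α) (c b : ℝ) :
    ∀ᶠ z in Filter.atTop, c * z + b ≤ α * z ^ γ := by
  have h1 : Tendsto (fun z : ℝ => α * z ^ (γ - 1) + -c) atTop atTop :=
    tendsto_atTop_add_const_right _ _
      ((tendsto_rpow_atTop (by linarith)).const_mul_atTop hα)
  have h2 : Tendsto (fun z : ℝ => z * (α * z ^ (γ - 1) + -c) + -b) atTop atTop :=
    tendsto_atTop_add_const_right _ _ (tendsto_id.atTop_mul_atTop₀ h1)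
  filter_upwards [h2.eventually_ge_atTop 0, eventually_gt_atTop (0 : ℝ)] with z hz hz0
  have hzg : z ^ γ = z ^ (γ - 1) * z := by
    rw [← Real.rpow_add_one hz0.ne' (γ - 1)]
    norm_num
  nlinarith [hz, hzg]

/-- Integral of `z ^ (γ - 2)`. -/
lemma aux_integral_rpow (γ : ℝ) (hγ : 1 < γ) (s t : ℝ) :
    ∫ z in s..t, z ^ (γ - 2) = (t ^ (γ - 1) - s ^ (γ - 1)) / (γ - 1) := by
  rw [integral_rpow (Or.inl (by linarith))]
  have he : γ - 2 + 1 = γ - 1 := by ring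
  rw [he]

/-- `h : [0,∞) → ℝ` is an admissible monotone pressure for exponent `γ` if `h` is
continuous on `[0,∞)`, twice continuously differentiable on `(0,∞)`, `h 0 = 0`,
`h′ r > 0` for all `r > 0`, and `h′ r / r ^ (γ - 1)` tends to a finite positive
constant `h_∞` as `r → ∞`. -/
def AdmissibleMonotonePressure (γ : ℝ) (h : ℝ → ℝ) : Prop :=
  ContinuousOn h (Set.Ici (0 : ℝ)) ∧
  ContDiffOn ℝ 2 h (Set.Ioi (0 : ℝ)) ∧
  h 0 = 0 ∧
  (∀ r ∈ Set.Ioi (0 : ℝ), 0 < deriv h r) ∧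
  ∃ hinf : ℝ, 0 < hinf ∧
    Filter.Tendsto (fun r : ℝ => deriv h r / r ^ (γ - 1)) Filter.atTop (nhds hinf)

set_option maxHeartbeats 1000000 in
/-- Fix `γ ∈ (1,∞)`. Let `h` be an admissible monotone pressure for exponent `γ`,
let `q : [0,∞) → ℝ` be globally Lipschitz with `q 0 = 0`, and set `p := h + q` and
`W r := r * ∫₁^r p z / z² dz` for `r > 0`. Then there exist positive constants
`c₁, c₂, c₃ > 0` such that for every `r > 0` one has
`r ^ γ ≤ c₁ + c₂ * W r` and `W r ≤ c₃ * (1 + r ^ γ)`. -/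
theorem pressure_potential_growth_bounds
    (γ : ℝ) (hγ : 1 < γ)
    (h q : ℝ → ℝ)
    (hh : AdmissibleMonotonePressure γ h)
    (L : NNReal) (hq : LipschitzOnWith L q (Set.Ici (0 : ℝ))) (hq0 : q 0 = 0)
    (p W : ℝ → ℝ)
    (hp : ∀ r, p r = h r + q r)
    (hW : ∀ r ∈ Set.Ioi (0 : ℝ), W r = r * ∫ z in (1 : ℝ)..r, p z / z ^ 2) :
    ∃ c₁ c₂ c₃ : ℝ, 0 < c₁ ∧ 0 < c₂ ∧ 0 < c₃ ∧
      ∀ r ∈ Set.Ioi (0 : ℝ), r ^ γ ≤ c₁ + c₂ * W r ∧ W r ≤ c₃ * (1 + r ^ γ) := by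
  obtain ⟨hcont, hC2, h0, hpos, hinf, hinf_pos, htend⟩ := hh
  have hγ0 : (0:ℝ) < γ - 1 := by linarith
  have hL0 : (0:ℝ) ≤ L := L.coe_nonneg
  -- q bound
  have hqb : ∀ r : ℝ, 0 ≤ r → |q r| ≤ L * r := by
    intro r hr
    have h1 := hq.dist_le_mul r hr 0 (le_refl (0:ℝ))
    simpa [hq0, Real.dist_eq, abs_of_nonneg hr] using h1
  -- monotonicity and nonnegativity of h
  have hmono : StrictMonoOn h (Set.Ici (0:ℝ)) := by
    apply strictMonoOn_of_deriv_pos (convex_Ici 0) hcont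
    intro x hx
    rw [interior_Ici] at hx
    exact hpos x hx
  have hnn : ∀ z : ℝ, 0 ≤ z → 0 ≤ h z := by
    intro z hz
    have := hmono.monotoneOn (Set.self_mem_Ici) hz hz
    simpa [h0] using this
  -- differentiability of h on positive axis
  have hdiffAt : ∀ x : ℝ, 0 < x → DifferentiableAt ℝ h x := by
    intro x hx
    exact (hC2.differentiableOn (by norm_num)).differentiableAt (isOpen_Ioi.mem_nhds hx)
  -- threshold R with two-sided derivative bounds
  have hev : ∀ᶠ z in atTop,
      (hinf/2) * z ^ (γ-1) ≤ deriv h z ∧ deriv h z ≤ 2*hinf * z ^ (γ-1) := by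
    have hmem : Set.Ioo (hinf/2) (2*hinf) ∈ nhds hinf :=
      Ioo_mem_nhds (by linarith) (by linarith)
    filter_upwards [htend.eventually hmem, eventually_gt_atTop (0:ℝ)] with z hz hz0
    have hzp : 0 < z ^ (γ-1) := Real.rpow_pos_of_pos hz0 _
    constructor
    · exact (le_div_iff₀ hzp).mp hz.1.le
    · exact (div_le_iff₀ hzp).mp hz.2.le
  obtain ⟨R₀, hR₀⟩ := eventually_atTop.mp hev
  set R : ℝ := max R₀ 1 with hRdef
  have hR1 : (1:ℝ) ≤ R := le_max_right _ _
  have hRpos : (0:ℝ) < R := lt_of_lt_of_le one_pos hR1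
  have hRbound : ∀ z, R ≤ z →
      (hinf/2) * z ^ (γ-1) ≤ deriv h z ∧ deriv h z ≤ 2*hinf * z ^ (γ-1) :=
    fun z hz => hR₀ z (le_trans (le_max_left _ _) hz)
  clear_value R
  -- continuity of rpow on positive sets
  have hcont_rpow : ∀ (e : ℝ) (s : Set ℝ), (∀ x ∈ s, 0 < x) →
      ContinuousOn (fun x : ℝ => x ^ e) s := by
    intro e s hs x hx
    exact (Real.continuousAt_rpow_const x e (Or.inl (hs x hx).ne')).continuousWithinAt
  -- upper bound for h beyond R
  have hupR : ∀ r, R ≤ r → h r ≤ h R + (2*hinf/γ) * (r ^ γ - R ^ γ) := by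
    intro r hr
    set g : ℝ → ℝ := fun x => (2*hinf/γ) * x ^ γ - h x with hg
    have hposIci : ∀ x ∈ Set.Ici R, (0:ℝ) < x := fun x hx => lt_of_lt_of_le hRpos hx
    have hgmono : MonotoneOn g (Set.Ici R) := by
      apply monotoneOn_of_deriv_nonneg (convex_Ici R)
      · exact (continuousOn_const.mul (hcont_rpow γ _ hposIci)).sub
          (hcont.mono (fun x hx => le_trans hRpos.le hx))
      · rw [interior_Ici]
        intro x hx
        have hx0 : 0 < x := lt_trans hRpos hx
        exact (((Real.hasDerivAt_rpow_const (p := γ) (Or.inl hx0.ne')).const_mul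
          (2*hinf/γ)).sub (hdiffAt x hx0).hasDerivAt).differentiableAt.differentiableWithinAt
      · rw [interior_Ici]
        intro x hx
        have hx0 : 0 < x := lt_trans hRpos hx
        have hd : HasDerivAt g ((2*hinf/γ) * (γ * x ^ (γ-1)) - deriv h x) x :=
          ((Real.hasDerivAt_rpow_const (p := γ) (Or.inl hx0.ne')).const_mul
            (2*hinf/γ)).sub (hdiffAt x hx0).hasDerivAt
        rw [hd.deriv]
        have h2 := (hRbound x hx.le).2
        have hcg : (2*hinf/γ) * (γ * x ^ (γ-1)) = 2*hinf * x ^ (γ-1) := by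
          field_simp
        rw [hcg]; linarith
    have := hgmono (Set.self_mem_Ici) hr hr
    simp only [hg] at this
    linarith
  -- lower bound for h beyond R
  have hlowR : ∀ r, R ≤ r → (hinf/(2*γ)) * (r ^ γ - R ^ γ) ≤ h r := by
    intro r hr
    set g : ℝ → ℝ := fun x => h x - (hinf/(2*γ)) * x ^ γ with hg
    have hposIci : ∀ x ∈ Set.Ici R, (0:ℝ) < x := fun x hx => lt_of_lt_of_le hRpos hx
    have hgmono : MonotoneOn g (Set.Ici R) := by
      apply monotoneOn_of_deriv_nonneg (convex_Ici R)
      · exact (hcont.mono (fun x hx => le_trans hRpos.le hx)).sub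
          (continuousOn_const.mul (hcont_rpow γ _ hposIci))
      · rw [interior_Ici]
        intro x hx
        have hx0 : 0 < x := lt_trans hRpos hx
        exact ((hdiffAt x hx0).hasDerivAt.sub
          ((Real.hasDerivAt_rpow_const (p := γ) (Or.inl hx0.ne')).const_mul
            (hinf/(2*γ)))).differentiableAt.differentiableWithinAt
      · rw [interior_Ici]
        intro x hx
        have hx0 : 0 < x := lt_trans hRpos hx
        have hd : HasDerivAt g (deriv h x - (hinf/(2*γ)) * (γ * x ^ (γ-1))) x :=
          (hdiffAt x hx0).hasDerivAt.sub
            ((Real.hasDerivAt_rpow_const (p := γ) (Or.inl hx0.ne')).const_mul (hinf/(2*γ)))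
        rw [hd.deriv]
        have h2 := (hRbound x hx.le).1
        have hcg : (hinf/(2*γ)) * (γ * x ^ (γ-1)) = (hinf/2) * x ^ (γ-1) := by
          field_simp
        rw [hcg]; linarith
    have := hgmono (Set.self_mem_Ici) hr hr
    simp only [hg] at this
    have hhR := hnn R hRpos.le
    linarith
  -- global constants
  set B₁ : ℝ := h R with hB₁def
  set B₂ : ℝ := 2*hinf/γ with hB₂def
  have hB₁ : 0 ≤ B₁ := hnn R hRpos.le
  have hB₂ : 0 < B₂ := by
    rw [hB₂def]; positivity
  set M : ℝ := B₁ + B₂ + L with hMdef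
  have hM : 0 < M := by rw [hMdef]; have := hB₁; have := hB₂; have := hL0; linarith
  set a : ℝ := hinf/(2*γ) with hadef
  have ha : 0 < a := by
    rw [hadef]; positivity
  clear_value B₁ B₂ M a
  -- global upper bound on h
  have hub : ∀ z : ℝ, 0 ≤ z → h z ≤ B₁ + B₂ * z ^ γ := by
    intro z hz
    have hzg : 0 ≤ z ^ γ := Real.rpow_nonneg hz γ
    rcases le_total z R with hzR | hzR
    · have := hmono.monotoneOn hz hRpos.le hzR
      nlinarith
    · have h1 := hupR z hzR
      have hRg : 0 ≤ R ^ γ := Real.rpow_nonneg hRpos.le γ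
      nlinarith
  -- bounds on p
  have hp_ub : ∀ z : ℝ, 0 ≤ z → p z ≤ B₁ + B₂ * z ^ γ + L * z := by
    intro z hz
    rw [hp z]
    have h1 := hub z hz
    have h2 := (abs_le.mp (hqb z hz)).2
    linarith
  have hp_lb : ∀ z : ℝ, 0 ≤ z → -(L * z) ≤ p z := by
    intro z hz
    rw [hp z]
    have h1 := hnn z hz
    have h2 := (abs_le.mp (hqb z hz)).1
    linarith
  have hp_lbR : ∀ z : ℝ, R ≤ z → a * (z ^ γ - R ^ γ) - L * z ≤ p z := by
    intro z hz
    rw [hp z]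
    have h1 := hlowR z hz
    have h2 := (abs_le.mp (hqb z (le_trans hRpos.le hz))).1
    linarith
  -- positivity helper for uIcc
  have huIcc_pos : ∀ s t : ℝ, 0 < s → 0 < t → ∀ z ∈ Set.uIcc s t, 0 < z := by
    intro s t hs ht z hz
    rcases Set.mem_uIcc.mp hz with ⟨h1, _⟩ | ⟨h1, _⟩ <;> linarith
  -- continuity / integrability of the integrand
  have hpcont : ContinuousOn p (Set.Ici (0:ℝ)) := by
    have hpe : p = fun r => h r + q r := funext hp
    rw [hpe]; exact hcont.add hq.continuousOn
  have hintp : ∀ s t : ℝ, 0 < s → 0 < t →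
      IntervalIntegrable (fun z => p z / z ^ 2) volume s t := by
    intro s t hs ht
    apply ContinuousOn.intervalIntegrable
    apply ContinuousOn.div
    · exact hpcont.mono (fun z hz => (huIcc_pos s t hs ht z hz).le)
    · exact (continuous_pow 2).continuousOn
    · intro z hz
      exact pow_ne_zero 2 (huIcc_pos s t hs ht z hz).ne'
  have hintr : ∀ (c e : ℝ) (s t : ℝ), 0 < s → 0 < t →
      IntervalIntegrable (fun z => c * z ^ e) volume s t := by
    intro c e s t hs ht
    exact (continuousOn_const.mul
      (hcont_rpow e _ (huIcc_pos s t hs ht))).intervalIntegrable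
  -- rpow arithmetic helpers
  have hz2 : ∀ z : ℝ, 0 < z → z ^ (-2:ℝ) = (z ^ 2)⁻¹ := by
    intro z hz
    rw [Real.rpow_neg hz.le, show (2:ℝ) = ((2:ℕ):ℝ) by norm_num, Real.rpow_natCast]
  have hzg2 : ∀ z : ℝ, 0 < z → z ^ γ / z ^ 2 = z ^ (γ - 2) := by
    intro z hz
    rw [sub_eq_add_neg, Real.rpow_add hz, hz2 z hz, div_eq_mul_inv]
  have hzr1 : ∀ z : ℝ, 0 < z → z * z ^ (γ - 1) = z ^ γ := by
    intro z hz
    rw [mul_comm, ← Real.rpow_add_one hz.ne' (γ-1)]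
    norm_num
  -- pointwise bounds on the integrand, for z ≥ 1
  have hpt_ub : ∀ z : ℝ, 1 ≤ z → p z / z ^ 2 ≤ M * z ^ (γ - 2) := by
    intro z hz
    have hz0 : (0:ℝ) < z := lt_of_lt_of_le one_pos hz
    have hzsq : (0:ℝ) < z ^ 2 := by positivity
    have h1 : p z ≤ M * z ^ γ := by
      have hzg1 : (1:ℝ) ≤ z ^ γ := by
        calc (1:ℝ) = z ^ (0:ℝ) := (Real.rpow_zero z).symm
        _ ≤ z ^ γ := Real.rpow_le_rpow_of_exponent_le hz (by linarith)
      have hzgz : z ≤ z ^ γ := by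
        calc z = z ^ (1:ℝ) := (Real.rpow_one z).symm
        _ ≤ z ^ γ := Real.rpow_le_rpow_of_exponent_le hz (by linarith)
      have := hp_ub z hz0.le
      nlinarith
    calc p z / z ^ 2 ≤ M * z ^ γ / z ^ 2 := (div_le_div_iff_of_pos_right hzsq).mpr h1
    _ = M * (z ^ γ / z ^ 2) := by ring
    _ = M * z ^ (γ - 2) := by rw [hzg2 z hz0]
  have hpt_lb : ∀ z : ℝ, 1 ≤ z → (-(L:ℝ)) * z ^ (γ - 2) ≤ p z / z ^ 2 := by
    intro z hz
    have hz0 : (0:ℝ) < z := lt_of_lt_of_le one_pos hz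
    have hzsq : (0:ℝ) < z ^ 2 := by positivity
    have e1 : z ^ (-1:ℝ) ≤ z ^ (γ - 2) :=
      Real.rpow_le_rpow_of_exponent_le hz (by linarith)
    have e2 : (-(L:ℝ)) * z ^ (γ - 2) ≤ (-(L:ℝ)) * z ^ (-1:ℝ) :=
      mul_le_mul_of_nonpos_left e1 (by linarith)
    have e3 : (-(L:ℝ)) * z ^ (-1:ℝ) = (-(L * z)) / z ^ 2 := by
      rw [Real.rpow_neg_one]
      field_simp
    have e4 : (-(L * z)) / z ^ 2 ≤ p z / z ^ 2 :=
      (div_le_div_iff_of_pos_right hzsq).mpr (hp_lb z hz0.le)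
    calc (-(L:ℝ)) * z ^ (γ - 2) ≤ (-(L:ℝ)) * z ^ (-1:ℝ) := e2
    _ = (-(L * z)) / z ^ 2 := e3
    _ ≤ p z / z ^ 2 := e4
  -- pointwise bounds for z ∈ (0, 1]
  have hpt_small : ∀ z : ℝ, 0 < z → z ≤ 1 →
      (-M) * z ^ (-2:ℝ) ≤ p z / z ^ 2 ∧ p z / z ^ 2 ≤ M * z ^ (-2:ℝ) := by
    intro z hz hz1
    have hzsq : (0:ℝ) < z ^ 2 := by positivity
    have hzg1 : z ^ γ ≤ 1 := Real.rpow_le_one hz.le hz1 (by linarith)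
    have hub' : p z ≤ M := by
      have := hp_ub z hz.le
      nlinarith
    have hlb' : -M ≤ p z := by
      have := hp_lb z hz.le
      nlinarith
    have he : ∀ c : ℝ, c * z ^ (-2:ℝ) = c / z ^ 2 := by
      intro c
      rw [hz2 z hz, div_eq_mul_inv]
    constructor
    · rw [he]
      exact (div_le_div_iff_of_pos_right hzsq).mpr hlb'
    · rw [he]
      exact (div_le_div_iff_of_pos_right hzsq).mpr hub'
  -- integral of z^(-2) on [r,1]
  have hint_inv : ∀ r : ℝ, 0 < r → r ≤ 1 → ∫ z in r..(1:ℝ), z ^ (-2:ℝ) = r⁻¹ - 1 := by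
    intro r hr hr1
    have hne : (0:ℝ) ∉ Set.uIcc r 1 := by
      rw [Set.uIcc_of_le hr1]
      rintro ⟨h1, -⟩
      linarith
    have he : (-2:ℝ) + 1 = -1 := by norm_num
    rw [integral_rpow (Or.inr ⟨by norm_num, hne⟩), he, Real.one_rpow, Real.rpow_neg_one]
    ring
  -- small r bounds on W
  have hsmall : ∀ r : ℝ, 0 < r → r ≤ 1 → -M ≤ W r ∧ W r ≤ M := by
    intro r hr hr1
    have hWr := hW r (Set.mem_Ioi.mpr hr)
    rw [integral_symm] at hWr
    set I : ℝ := ∫ z in r..(1:ℝ), p z / z ^ 2 with hI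
    have hIub : I ≤ M * (r⁻¹ - 1) := by
      calc I ≤ ∫ z in r..(1:ℝ), M * z ^ (-2:ℝ) := by
            apply integral_mono_on hr1 (hintp r 1 hr one_pos) (hintr M (-2) r 1 hr one_pos)
            intro z hz
            exact (hpt_small z (lt_of_lt_of_le hr hz.1) hz.2).2
      _ = M * (r⁻¹ - 1) := by rw [intervalIntegral.integral_const_mul, hint_inv r hr hr1]
    have hIlb : (-M) * (r⁻¹ - 1) ≤ I := by
      calc (-M) * (r⁻¹ - 1) = ∫ z in r..(1:ℝ), (-M) * z ^ (-2:ℝ) := by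
            rw [intervalIntegral.integral_const_mul, hint_inv r hr hr1]
      _ ≤ I := by
            apply integral_mono_on hr1 (hintr (-M) (-2) r 1 hr one_pos) (hintp r 1 hr one_pos)
            intro z hz
            exact (hpt_small z (lt_of_lt_of_le hr hz.1) hz.2).1
    have e1 : r * (M * (r⁻¹ - 1)) = M - M * r := by
      field_simp
    have e2 : r * ((-M) * (r⁻¹ - 1)) = M * r - M := by
      field_simp; ring
    have hMr : 0 ≤ M * r := mul_nonneg hM.le hr.le
    clear_value I
    constructor
    · have h5 := mul_le_mul_of_nonneg_left hIub hr.le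
      rw [hWr]
      linarith
    · have h5 := mul_le_mul_of_nonneg_left hIlb hr.le
      rw [hWr]
      linarith
  -- generic integral bounds on [s,t] ⊂ [1,∞)
  have hIub_gen : ∀ s t : ℝ, 1 ≤ s → s ≤ t →
      ∫ z in s..t, p z / z ^ 2 ≤ M * ((t ^ (γ-1) - s ^ (γ-1)) / (γ-1)) := by
    intro s t hs hst
    have hs0 : (0:ℝ) < s := lt_of_lt_of_le one_pos hs
    have ht0 : (0:ℝ) < t := lt_of_lt_of_le hs0 hst
    calc ∫ z in s..t, p z / z ^ 2 ≤ ∫ z in s..t, M * z ^ (γ-2) := by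
          apply integral_mono_on hst (hintp s t hs0 ht0) (hintr M (γ-2) s t hs0 ht0)
          intro z hz
          exact hpt_ub z (le_trans hs hz.1)
    _ = M * ((t ^ (γ-1) - s ^ (γ-1)) / (γ-1)) := by
          rw [intervalIntegral.integral_const_mul, aux_integral_rpow γ hγ]
  have hIlb_gen : ∀ s t : ℝ, 1 ≤ s → s ≤ t →
      (-(L:ℝ)) * ((t ^ (γ-1) - s ^ (γ-1)) / (γ-1)) ≤ ∫ z in s..t, p z / z ^ 2 := by
    intro s t hs hst
    have hs0 : (0:ℝ) < s := lt_of_lt_of_le one_pos hs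
    have ht0 : (0:ℝ) < t := lt_of_lt_of_le hs0 hst
    calc (-(L:ℝ)) * ((t ^ (γ-1) - s ^ (γ-1)) / (γ-1))
        = ∫ z in s..t, (-(L:ℝ)) * z ^ (γ-2) := by
          rw [intervalIntegral.integral_const_mul, aux_integral_rpow γ hγ]
    _ ≤ ∫ z in s..t, p z / z ^ 2 := by
          apply integral_mono_on hst (hintr _ _ s t hs0 ht0) (hintp s t hs0 ht0)
          intro z hz
          exact hpt_lb z (le_trans hs hz.1)
  -- upper bound for W on [1,∞)
  have hbig_ub : ∀ r : ℝ, 1 ≤ r → W r ≤ M / (γ-1) * r ^ γ := by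
    intro r hr
    have hr0 : (0:ℝ) < r := lt_of_lt_of_le one_pos hr
    have hWr := hW r (Set.mem_Ioi.mpr hr0)
    have h1 := hIub_gen 1 r le_rfl hr
    rw [Real.one_rpow] at h1
    have h2 := mul_le_mul_of_nonneg_left h1 hr0.le
    have h3 : r * r ^ (γ-1) = r ^ γ := hzr1 r hr0
    have hrg1 : (1:ℝ) ≤ r ^ (γ-1) := by
      calc (1:ℝ) = r ^ (0:ℝ) := (Real.rpow_zero r).symm
      _ ≤ r ^ (γ-1) := Real.rpow_le_rpow_of_exponent_le hr (by linarith)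
    rw [hWr]
    have hdiff : M / (γ-1) * r ^ γ - r * (M * ((r ^ (γ-1) - 1) / (γ-1)))
        = M * r / (γ-1) := by
      rw [← h3]; field_simp; ring
    have hnn' : 0 ≤ M * r / (γ-1) := div_nonneg (mul_nonneg hM.le hr0.le) hγ0.le
    linarith
  -- threshold T beyond which p z ≥ (a/2) z^γ
  obtain ⟨T₀, hT₀⟩ := eventually_atTop.mp
    (aux_linear_le_rpow γ hγ (a/2) (half_pos ha) L (a * R ^ γ))
  set T : ℝ := max T₀ R with hTdef
  have hTT₀ : T₀ ≤ T := le_max_left _ _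
  have hTR : R ≤ T := le_max_right _ _
  have hT1 : (1:ℝ) ≤ T := le_trans hR1 hTR
  have hT0 : (0:ℝ) < T := lt_of_lt_of_le one_pos hT1
  clear_value T
  have hp_geT : ∀ z : ℝ, T ≤ z → (a/2) * z ^ γ ≤ p z := by
    intro z hz
    have h1 := hp_lbR z (le_trans hTR hz)
    have h2 := hT₀ z (le_trans hTT₀ hz)
    nlinarith
  have hpt_lbT : ∀ z : ℝ, T ≤ z → (a/2) * z ^ (γ-2) ≤ p z / z ^ 2 := by
    intro z hz
    have hz0 : (0:ℝ) < z := lt_of_lt_of_le hT0 hz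
    have hzsq : (0:ℝ) < z ^ 2 := by positivity
    have := (div_le_div_iff_of_pos_right hzsq).mpr (hp_geT z hz)
    calc (a/2) * z ^ (γ-2) = (a/2) * (z ^ γ / z ^ 2) := by rw [hzg2 z hz0]
    _ = (a/2) * z ^ γ / z ^ 2 := by ring
    _ ≤ p z / z ^ 2 := this
  -- lower bound for W beyond T
  set D : ℝ := (a/2 + L) * T ^ (γ-1) / (γ-1) with hDdef
  have hD0 : 0 ≤ D := by
    have h1 : (0:ℝ) ≤ T ^ (γ-1) := Real.rpow_nonneg hT0.le _
    rw [hDdef]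
    exact div_nonneg (mul_nonneg (by linarith) h1) hγ0.le
  set α' : ℝ := (a/2) / (γ-1) with hα'def
  have hα'0 : 0 < α' := by rw [hα'def]; exact div_pos (half_pos ha) hγ0
  clear_value D α'
  have hWlow_big : ∀ r : ℝ, T ≤ r → α' * r ^ γ - D * r ≤ W r := by
    intro r hr
    have hr0 : (0:ℝ) < r := lt_of_lt_of_le hT0 hr
    have hWr := hW r (Set.mem_Ioi.mpr hr0)
    have hsplit : ∫ z in (1:ℝ)..r, p z / z ^ 2 =
        (∫ z in (1:ℝ)..T, p z / z ^ 2) + ∫ z in T..r, p z / z ^ 2 :=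
      (integral_add_adjacent_intervals (hintp 1 T one_pos hT0) (hintp T r hT0 hr0)).symm
    have h1 := hIlb_gen 1 T le_rfl hT1
    rw [Real.one_rpow] at h1
    have h2 : (a/2) * ((r ^ (γ-1) - T ^ (γ-1)) / (γ-1)) ≤ ∫ z in T..r, p z / z ^ 2 := by
      calc (a/2) * ((r ^ (γ-1) - T ^ (γ-1)) / (γ-1)) = ∫ z in T..r, (a/2) * z ^ (γ-2) := by
            rw [intervalIntegral.integral_const_mul, aux_integral_rpow γ hγ]
      _ ≤ ∫ z in T..r, p z / z ^ 2 := by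
            apply integral_mono_on hr (hintr _ _ T r hT0 hr0) (hintp T r hT0 hr0)
            intro z hz
            exact hpt_lbT z hz.1
    have hsum : (-(L:ℝ)) * ((T ^ (γ-1) - 1) / (γ-1)) + (a/2) * ((r ^ (γ-1) - T ^ (γ-1)) / (γ-1))
        ≤ ∫ z in (1:ℝ)..r, p z / z ^ 2 := by
      rw [hsplit]; exact add_le_add h1 h2
    have h3 := mul_le_mul_of_nonneg_left hsum hr0.le
    rw [hWr]
    have h4 : r * r ^ (γ-1) = r ^ γ := hzr1 r hr0
    have hTg : (1:ℝ) ≤ T ^ (γ-1) := by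
      calc (1:ℝ) = T ^ (0:ℝ) := (Real.rpow_zero T).symm
      _ ≤ T ^ (γ-1) := Real.rpow_le_rpow_of_exponent_le hT1 (by linarith)
    -- show α' * r^γ - D*r ≤ r * (sum)
    have hdiff : r * ((-(L:ℝ)) * ((T ^ (γ-1) - 1) / (γ-1)) + (a/2) * ((r ^ (γ-1) - T ^ (γ-1)) / (γ-1)))
        - (α' * r ^ γ - D * r) = L * r / (γ-1) := by
      rw [hα'def, hDdef, ← h4]; field_simp; ring
    have hnn' : (0:ℝ) ≤ L * r / (γ-1) := div_nonneg (mul_nonneg hL0 hr0.le) hγ0.le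
    linarith
  -- second threshold T'
  obtain ⟨T₁, hT₁⟩ := eventually_atTop.mp
    (aux_linear_le_rpow γ hγ (α'/2) (half_pos hα'0) D 0)
  set T' : ℝ := max T₁ T with hT'def
  have hT'T₁ : T₁ ≤ T' := le_max_left _ _
  have hT'T : T ≤ T' := le_max_right _ _
  have hT'1 : (1:ℝ) ≤ T' := le_trans hT1 hT'T
  have hT'0 : (0:ℝ) < T' := lt_of_lt_of_le one_pos hT'1
  clear_value T'
  have hfinal_big : ∀ r : ℝ, T' ≤ r → r ^ γ ≤ (2/α') * W r := by
    intro r hr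
    have h1 := hWlow_big r (le_trans hT'T hr)
    have h2 := hT₁ r (le_trans hT'T₁ hr)
    have h3 : (α'/2) * r ^ γ ≤ W r := by nlinarith
    have h4 := mul_le_mul_of_nonneg_left h3 (le_of_lt (div_pos two_pos hα'0))
    have hα'ne : α' ≠ 0 := ne_of_gt hα'0
    calc r ^ γ = (2/α') * ((α'/2) * r ^ γ) := by field_simp
    _ ≤ (2/α') * W r := h4
  -- lower bound on W for r ∈ (0, T']
  set K : ℝ := M + L * T' ^ γ / (γ-1) with hKdef
  have hK0 : 0 < K := by
    have h1 : (0:ℝ) ≤ L * T' ^ γ / (γ-1) :=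
      div_nonneg (mul_nonneg hL0 (Real.rpow_nonneg hT'0.le _)) hγ0.le
    rw [hKdef]
    linarith
  clear_value K
  have hWlb_small : ∀ r : ℝ, 0 < r → r ≤ T' → -K ≤ W r := by
    intro r hr hrT'
    have hTg : (0:ℝ) ≤ L * T' ^ γ / (γ-1) :=
      div_nonneg (mul_nonneg hL0 (Real.rpow_nonneg hT'0.le _)) hγ0.le
    rcases le_total r 1 with hr1 | hr1
    · have := (hsmall r hr hr1).1
      rw [hKdef]
      linarith
    · have hr0 : (0:ℝ) < r := hr
      have hWr := hW r (Set.mem_Ioi.mpr hr0)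
      have h1 := hIlb_gen 1 r le_rfl hr1
      rw [Real.one_rpow] at h1
      have h2 := mul_le_mul_of_nonneg_left h1 hr0.le
      rw [hWr]
      have h3 : r * r ^ (γ-1) = r ^ γ := hzr1 r hr0
      have hrg1 : (1:ℝ) ≤ r ^ (γ-1) := by
        calc (1:ℝ) = r ^ (0:ℝ) := (Real.rpow_zero r).symm
        _ ≤ r ^ (γ-1) := Real.rpow_le_rpow_of_exponent_le hr1 (by linarith)
      have hrT'g : r ^ γ ≤ T' ^ γ := Real.rpow_le_rpow hr0.le hrT' (by linarith)
      have key : -K ≤ r * ((-(L:ℝ)) * ((r ^ (γ-1) - 1) / (γ-1))) := by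
        have e1 : r * ((-(L:ℝ)) * ((r ^ (γ-1) - 1) / (γ-1)))
            = -(L * (r ^ γ - r)) / (γ-1) := by
          rw [← h3]; ring
        have e2 : -(L * (r ^ γ - r)) / (γ-1) - (-K)
            = M + ((L * (T' ^ γ - r ^ γ) + L * r) / (γ-1)) := by
          rw [hKdef]; field_simp; ring
        have n1 : (0:ℝ) ≤ L * (T' ^ γ - r ^ γ) :=
          mul_nonneg hL0 (sub_nonneg.mpr hrT'g)
        have n2 : (0:ℝ) ≤ L * r := mul_nonneg hL0 hr0.le
        have n3 : (0:ℝ) ≤ (L * (T' ^ γ - r ^ γ) + L * r) / (γ-1) :=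
          div_nonneg (by linarith) hγ0.le
        linarith
      linarith
  -- assemble constants
  have hc₂pos : (0:ℝ) < 2/α' := div_pos two_pos hα'0
  have hc₃pos : (0:ℝ) < M/(γ-1) + M := by
    have := div_pos hM hγ0; linarith
  refine ⟨T' ^ γ + (2/α') * K + 1, 2/α', M/(γ-1) + M, ?_, hc₂pos, hc₃pos, ?_⟩
  · have h1 : (0:ℝ) < T' ^ γ := Real.rpow_pos_of_pos hT'0 _
    have h2 : (0:ℝ) ≤ (2/α') * K := mul_nonneg hc₂pos.le hK0.le
    linarith
  · intro r hr
    rw [Set.mem_Ioi] at hr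
    constructor
    · rcases le_total r T' with hrT' | hrT'
      · have h1 := hWlb_small r hr hrT'
        have h2 := mul_le_mul_of_nonneg_left h1 hc₂pos.le
        have h3 : r ^ γ ≤ T' ^ γ := Real.rpow_le_rpow hr.le hrT' (by linarith)
        nlinarith
      · have h1 := hfinal_big r hrT'
        have hc₁ : (0:ℝ) ≤ T' ^ γ + (2/α') * K + 1 := by
          have h2 : (0:ℝ) ≤ T' ^ γ := Real.rpow_nonneg hT'0.le _
          have h3 : (0:ℝ) ≤ (2/α') * K := mul_nonneg hc₂pos.le hK0.le
          linarith
        linarith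
    · rcases le_total r 1 with hr1 | hr1
      · have h1 := (hsmall r hr hr1).2
        have h2 : (0:ℝ) ≤ r ^ γ := Real.rpow_nonneg hr.le _
        have h3 : (0:ℝ) < M/(γ-1) := div_pos hM hγ0
        nlinarith
      · have h1 := hbig_ub r hr1
        have h2 : (0:ℝ) ≤ r ^ γ := Real.rpow_nonneg hr.le _
        have h3 : (0:ℝ) < M/(γ-1) := div_pos hM hγ0
        nlinarith
end

section
/- Fix γ ∈ (1,∞). Let h be an admissible monotone pressure for exponent γ, let q : [0,∞) → ℝ be globally Lipschitz with q(0) = 0, set p := h + q and W(r) := r ∫₁^r p(z)/z² dz for r > 0. Then W(r) has a finite limit as r → 0⁺. -/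
/-- Fix `γ ∈ (1,∞)`. Let `h` be an admissible monotone pressure for exponent `γ`,
let `q : [0,∞) → ℝ` be globally Lipschitz with `q 0 = 0`, set `p := h + q` and
`W r := r * ∫₁^r p z / z² dz` for `r > 0`. Then `W r` has a finite limit as `r → 0⁺`. -/
theorem pressure_potential_limit_at_zero
    (γ : ℝ) (hγ : 1 < γ)
    (h q : ℝ → ℝ)
    (hh : AdmissibleMonotonePressure γ h)
    (L : NNReal) (hq : LipschitzOnWith L q (Set.Ici (0 : ℝ))) (hq0 : q 0 = 0)
    (p W : ℝ → ℝ)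
    (hp : ∀ r, p r = h r + q r)
    (hW : ∀ r ∈ Set.Ioi (0 : ℝ), W r = r * ∫ z in (1 : ℝ)..r, p z / z ^ 2) :
    ∃ l : ℝ, Filter.Tendsto W (nhdsWithin 0 (Set.Ioi (0 : ℝ))) (nhds l) := by
  obtain ⟨hcontH, -, h0, -, -⟩ := hh
  have hcontp : ContinuousOn p (Set.Ici (0:ℝ)) := by
    have h1 : ContinuousOn (fun r => h r + q r) (Set.Ici (0:ℝ)) :=
      hcontH.add hq.continuousOn
    exact h1.congr fun r _ => hp r
  have hp0 : p 0 = 0 := by rw [hp, h0, hq0]; ring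
  -- integrability of the integrand on intervals away from 0
  have hintg : ∀ a b : ℝ, 0 < a → a ≤ b →
      IntervalIntegrable (fun z => p z / z ^ 2) MeasureTheory.volume a b := by
    intro a b ha hab
    apply ContinuousOn.intervalIntegrable
    have hsub : Set.uIcc a b ⊆ Set.Ici (0:ℝ) := by
      rw [Set.uIcc_of_le hab]
      intro x hx
      exact le_trans ha.le hx.1
    apply ContinuousOn.div (hcontp.mono hsub) (by fun_prop)
    intro x hx
    rw [Set.uIcc_of_le hab] at hx
    have : 0 < x := lt_of_lt_of_le ha hx.1
    positivity
  have hintz : ∀ (c a b : ℝ), IntervalIntegrable (fun z => c / z ^ 2) MeasureTheory.volume a b → True := fun _ _ _ _ => trivial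
  -- integrability and value of the comparison integral
  have hcompint : ∀ (c a b : ℝ), 0 < a → a ≤ b →
      IntervalIntegrable (fun z => c / z ^ 2) MeasureTheory.volume a b := by
    intro c a b ha hab
    apply ContinuousOn.intervalIntegrable
    apply ContinuousOn.div continuousOn_const (by fun_prop)
    intro x hx
    rw [Set.uIcc_of_le hab] at hx
    have : 0 < x := lt_of_lt_of_le ha hx.1
    positivity
  have hcompval : ∀ (c a b : ℝ), 0 < a → a ≤ b →
      (∫ z in a..b, c / z ^ 2) = c * (1/a - 1/b) := by
    intro c a b ha hab
    have hz : ∀ z : ℝ, c / z ^ 2 = c * z ^ (-2:ℤ) := by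
      intro z
      rw [zpow_neg, div_eq_mul_inv]
      norm_num
    simp_rw [hz]
    have h0 : (0:ℝ) ∉ Set.uIcc a b := by
      intro hc
      rw [Set.uIcc_of_le hab] at hc
      linarith [hc.1]
    have hb : 0 < b := lt_of_lt_of_le ha hab
    have key : (∫ z in a..b, (z:ℝ) ^ (-2:ℤ)) = 1/a - 1/b := by
      rw [integral_zpow (Or.inr ⟨by omega, h0⟩)]
      norm_num
      ring
    rw [intervalIntegral.integral_const_mul, key]
  -- key bound on the integral
  have hbound : ∀ (c a b : ℝ), 0 < a → a ≤ b → (∀ z ∈ Set.Icc a b, |p z| ≤ c) →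
      |∫ z in a..b, p z / z ^ 2| ≤ c * (1/a - 1/b) := by
    intro c a b ha hab hbd
    calc |∫ z in a..b, p z / z ^ 2| ≤ ∫ z in a..b, |p z / z ^ 2| :=
          intervalIntegral.abs_integral_le_integral_abs hab
      _ ≤ ∫ z in a..b, c / z ^ 2 := by
          apply intervalIntegral.integral_mono_on hab ((hintg a b ha hab).abs)
            (hcompint c a b ha hab)
          intro x hx
          have hx0 : 0 < x := lt_of_lt_of_le ha hx.1
          rw [abs_div, abs_of_nonneg (by positivity : (0:ℝ) ≤ x ^ 2)]
          exact div_le_div_of_nonneg_right (hbd x hx) (by positivity) |>.trans_eq rfl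
      _ = c * (1/a - 1/b) := hcompval c a b ha hab
  refine ⟨0, ?_⟩
  rw [Metric.tendsto_nhdsWithin_nhds]
  intro ε hε
  -- δc from continuity of p at 0
  have hc0 : ContinuousWithinAt p (Set.Ici (0:ℝ)) 0 := hcontp 0 (Set.mem_Ici.2 le_rfl)
  rw [ContinuousWithinAt, Metric.tendsto_nhdsWithin_nhds] at hc0
  obtain ⟨δc, hδc, hcball⟩ := hc0 (ε/2) (by linarith)
  set δ₁ : ℝ := min (δc/2) (1/2) with hδ₁def
  have hδ₁pos : 0 < δ₁ := lt_min (by linarith) (by norm_num)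
  have hδ₁le : δ₁ ≤ 1/2 := min_le_right _ _
  have hδ₁lt1 : δ₁ < 1 := by linarith
  have hsmall : ∀ z ∈ Set.Icc (0:ℝ) δ₁, |p z| ≤ ε/2 := by
    intro z hz
    have : dist z 0 < δc := by
      rw [Real.dist_eq, sub_zero, abs_of_nonneg hz.1]
      calc z ≤ δ₁ := hz.2
        _ ≤ δc/2 := min_le_left _ _
        _ < δc := by linarith
    have := hcball hz.1 this
    rw [hp0, Real.dist_eq, sub_zero] at this
    linarith
  -- max of |p| on [δ₁, 1]
  obtain ⟨c, hcmem, hcmax⟩ := (isCompact_Icc (a := δ₁) (b := 1)).exists_isMaxOn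
    ⟨δ₁, le_refl _, hδ₁lt1.le⟩
    ((hcontp.mono (fun x hx => le_trans hδ₁pos.le hx.1)).abs)
  set M : ℝ := |p c| + 1 with hMdef
  have hMpos : 0 < M := by positivity
  have hbig : ∀ z ∈ Set.Icc δ₁ (1:ℝ), |p z| ≤ M := by
    intro z hz
    have := hcmax hz
    simp only [Set.mem_setOf_eq] at this
    linarith [this]
  refine ⟨min δ₁ (ε/2 * δ₁ / M), lt_min hδ₁pos (by positivity), ?_⟩
  intro r hr hrd
  have hr0 : 0 < r := hr
  rw [Real.dist_eq, sub_zero, abs_of_pos hr0] at hrd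
  have hrδ₁ : r < δ₁ := lt_of_lt_of_le hrd (min_le_left _ _)
  have hrsmall : r < ε/2 * δ₁ / M := lt_of_lt_of_le hrd (min_le_right _ _)
  have hr1 : r < 1 := by linarith
  -- split the integral
  have hsplit : (∫ z in r..δ₁, p z / z ^ 2) + (∫ z in δ₁..(1:ℝ), p z / z ^ 2)
      = ∫ z in r..(1:ℝ), p z / z ^ 2 :=
    intervalIntegral.integral_add_adjacent_intervals (hintg r δ₁ hr0 hrδ₁.le)
      (hintg δ₁ 1 hδ₁pos hδ₁lt1.le)
  have hb1 : |∫ z in r..δ₁, p z / z ^ 2| ≤ ε/2 * (1/r - 1/δ₁) := by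
    apply hbound _ _ _ hr0 hrδ₁.le
    intro z hz
    exact hsmall z ⟨le_trans hr0.le hz.1, hz.2⟩
  have hb2 : |∫ z in δ₁..(1:ℝ), p z / z ^ 2| ≤ M * (1/δ₁ - 1/1) :=
    hbound _ _ _ hδ₁pos hδ₁lt1.le hbig
  have hWr : W r = -(r * ∫ z in r..(1:ℝ), p z / z ^ 2) := by
    rw [hW r hr, intervalIntegral.integral_symm]
    ring
  rw [Real.dist_eq, sub_zero, hWr, abs_neg, abs_mul, abs_of_pos hr0]
  have htot : |∫ z in r..(1:ℝ), p z / z ^ 2| ≤ ε/2 * (1/r - 1/δ₁) + M * (1/δ₁ - 1/1) := by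
    rw [← hsplit]
    exact le_trans (abs_add_le _ _) (add_le_add hb1 hb2)
  have h1r : 0 < 1/r := by positivity
  have h1δ : 0 < 1/δ₁ := by positivity
  calc r * |∫ z in r..(1:ℝ), p z / z ^ 2|
      ≤ r * (ε/2 * (1/r - 1/δ₁) + M * (1/δ₁ - 1/1)) := by
        apply mul_le_mul_of_nonneg_left htot hr0.le
    _ ≤ r * (ε/2 * (1/r)) + r * (M * (1/δ₁)) := by
        nlinarith [mul_nonneg hr0.le hMpos.le,
          mul_nonneg (mul_nonneg hr0.le (by linarith : (0:ℝ) ≤ ε/2)) h1δ.le]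
    _ = ε/2 + r * M / δ₁ := by
        field_simp
    _ < ε/2 + ε/2 := by
        have : r * M / δ₁ < ε/2 := by
          rw [div_lt_iff₀ hδ₁pos]
          calc r * M < (ε/2 * δ₁ / M) * M := by
                apply mul_lt_mul_of_pos_right hrsmall hMpos
            _ = ε/2 * δ₁ := by field_simp
        linarith
    _ = ε := by ring
end

section
/- Fix γ ∈ (1,∞), let h be an admissible monotone pressure for exponent γ with pressure potential H (extended continuously to r = 0), and let 0 < r₁ < a < b < r₂ < ∞. Then there exists a constant k_h > 0, depending only on r₁, r₂, a, b and h, such that for every r ∈ [a,b] and every ρ ∈ [0,∞): if ρ ∈ [r₁,r₂] then H(ρ) − H(r) − H′(r)(ρ − r) ≥ k_h · |ρ − r|², and if ρ ∈ [0,r₁) ∪ (r₂,∞) then H(ρ) − H(r) − H′(r)(ρ − r) ≥ k_h · (1 + ρ^γ). -/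
open Set Filter

lemma monoOn_of_hasDerivAt {f f' : ℝ → ℝ} {s : Set ℝ} (hs : Convex ℝ s)
    (hd : ∀ x ∈ s, HasDerivAt f (f' x) x) (h0 : ∀ x ∈ s, 0 ≤ f' x) :
    MonotoneOn f s := by
  apply monotoneOn_of_deriv_nonneg hs
  · exact fun x hx => (hd x hx).continuousAt.continuousWithinAt
  · exact fun x hx => ((hd x (interior_subset hx)).differentiableAt).differentiableWithinAt
  · intro x hx
    rw [(hd x (interior_subset hx)).deriv]
    exact h0 x (interior_subset hx)

lemma antiOn_of_hasDerivAt {f f' : ℝ → ℝ} {s : Set ℝ} (hs : Convex ℝ s)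
    (hd : ∀ x ∈ s, HasDerivAt f (f' x) x) (h0 : ∀ x ∈ s, f' x ≤ 0) :
    AntitoneOn f s := by
  apply antitoneOn_of_deriv_nonpos hs
  · exact fun x hx => (hd x hx).continuousAt.continuousWithinAt
  · exact fun x hx => ((hd x (interior_subset hx)).differentiableAt).differentiableWithinAt
  · intro x hx
    rw [(hd x (interior_subset hx)).deriv]
    exact h0 x (interior_subset hx)

lemma tangent_line_le {f f' : ℝ → ℝ} {s : Set ℝ} (hs : Convex ℝ s)
    (hd : ∀ x ∈ s, HasDerivAt f (f' x) x)
    (hmono : MonotoneOn f' s)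
    {r x : ℝ} (hr : r ∈ s) (hx : x ∈ s) :
    f r + f' r * (x - r) ≤ f x := by
  have key : ∀ t ∈ s, HasDerivAt (fun u => f u - f' r * u) (f' t - f' r) t := by
    intro t ht
    have := (hd t ht).sub ((hasDerivAt_id t).const_mul (f' r))
    simp only [mul_one] at this
    exact this
  have e : f' r * (x - r) = f' r * x - f' r * r := by ring
  rcases le_total r x with hrx | hxr
  · have hmonog : MonotoneOn (fun u => f u - f' r * u) (s ∩ Ici r) :=
      monoOn_of_hasDerivAt (hs.inter (convex_Ici r)) (fun t ht => key t ht.1)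
        (fun t ht => sub_nonneg.2 (hmono hr ht.1 ht.2))
    have h2 := hmonog ⟨hr, le_refl r⟩ ⟨hx, hrx⟩ hrx
    simp only at h2
    linarith
  · have hmonog : AntitoneOn (fun u => f u - f' r * u) (s ∩ Iic r) :=
      antiOn_of_hasDerivAt (hs.inter (convex_Iic r)) (fun t ht => key t ht.1)
        (fun t ht => sub_nonpos.2 (hmono ht.1 hr ht.2))
    have h2 := hmonog ⟨hx, hxr⟩ ⟨hr, le_refl r⟩ hxr
    simp only at h2
    linarith

set_option maxHeartbeats 2000000 in
/-- Fix `γ ∈ (1,∞)`, let `h` be an admissible monotone pressure for exponent `γ` with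
pressure potential `H` (extended continuously to `r = 0`), and let
`0 < r₁ < a < b < r₂ < ∞`. Then there exists `k_h > 0`, depending only on
`r₁, r₂, a, b` and `h`, such that for every `r ∈ [a,b]` and every `ρ ∈ [0,∞)`:
if `ρ ∈ [r₁,r₂]` then `H ρ − H r − H′ r * (ρ − r) ≥ k_h * |ρ − r|²`, and
if `ρ ∈ [0,r₁) ∪ (r₂,∞)` then `H ρ − H r − H′ r * (ρ − r) ≥ k_h * (1 + ρ ^ γ)`. -/
theorem relative_entropy_lower_bound
    (γ : ℝ) (hγ : 1 < γ)
    (h : ℝ → ℝ) (hh : AdmissibleMonotonePressure γ h)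
    (H : ℝ → ℝ)
    (hH : ∀ r ∈ Set.Ioi (0 : ℝ), H r = r * ∫ z in (1 : ℝ)..r, h z / z ^ 2)
    (hH0 : Filter.Tendsto H (nhdsWithin 0 (Set.Ioi (0 : ℝ))) (nhds (H 0)))
    (r₁ a b r₂ : ℝ) (hr₁ : 0 < r₁) (h₁a : r₁ < a) (hab : a < b) (hbr₂ : b < r₂) :
    ∃ kh : ℝ, 0 < kh ∧
      ∀ r ∈ Set.Icc a b, ∀ ρ : ℝ, 0 ≤ ρ →
        (ρ ∈ Set.Icc r₁ r₂ →
          kh * |ρ - r| ^ 2 ≤ H ρ - H r - deriv H r * (ρ - r)) ∧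
        ((ρ < r₁ ∨ r₂ < ρ) →
          kh * (1 + ρ ^ γ) ≤ H ρ - H r - deriv H r * (ρ - r)) := by
  obtain ⟨hc, hcd, hzero, hdpos, hinf, hinfpos, htend⟩ := hh
  have hγ0 : (0:ℝ) < γ := by linarith
  have hγ1 : (0:ℝ) < γ - 1 := by linarith
  have h1a : (0:ℝ) < a := lt_trans hr₁ h₁a
  have hr₂pos : (0:ℝ) < r₂ := by linarith
  -- derivative scaffolding
  set f : ℝ → ℝ := fun z => h z / z ^ 2 with hfdef
  have hfc : ContinuousOn f (Ioi 0) :=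
    (hc.mono (Ioi_subset_Ici le_rfl)).div ((continuous_pow 2).continuousOn)
      (fun z hz => pow_ne_zero 2 (ne_of_gt hz))
  have hfint : ∀ x ∈ Ioi (0:ℝ), IntervalIntegrable f MeasureTheory.volume 1 x := by
    intro x hx
    apply (hfc.mono ?_).intervalIntegrable
    intro z hz
    rcases Set.mem_uIcc.mp hz with ⟨h1, _⟩ | ⟨h1, _⟩
    · exact lt_of_lt_of_le one_pos h1
    · exact lt_of_lt_of_le hx h1
  set I : ℝ → ℝ := fun u => ∫ z in (1:ℝ)..u, f z with hIdef
  have hIder : ∀ x ∈ Ioi (0:ℝ), HasDerivAt I (f x) x := by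
    intro x hx
    exact intervalIntegral.integral_hasDerivAt_right (hfint x hx)
      ⟨Ioi 0, Ioi_mem_nhds hx, hfc.aestronglyMeasurable measurableSet_Ioi⟩
      (hfc.continuousAt (Ioi_mem_nhds hx))
  set HD : ℝ → ℝ := fun x => I x + h x / x with hHDdef
  have hHder : ∀ x ∈ Ioi (0:ℝ), HasDerivAt H (HD x) x := by
    intro x hx
    have hprod : HasDerivAt (fun u => u * I u) (1 * I x + x * f x) x :=
      (hasDerivAt_id x).mul (hIder x hx)
    have heq : H =ᶠ[nhds x] (fun u => u * I u) := by
      filter_upwards [Ioi_mem_nhds hx] with y hy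
      exact hH y hy
    have h2 := hprod.congr_of_eventuallyEq heq
    have h3 : 1 * I x + x * f x = HD x := by
      simp only [hHDdef, hfdef, one_mul]
      have hx0 : x ≠ 0 := ne_of_gt hx
      field_simp
    rwa [h3] at h2
  have hderivH : ∀ x ∈ Ioi (0:ℝ), deriv H x = HD x := fun x hx => (hHder x hx).deriv
  have hdh : ∀ x ∈ Ioi (0:ℝ), HasDerivAt h (deriv h x) x := by
    intro x hx
    exact ((hcd.differentiableOn (by norm_num)).differentiableAt (Ioi_mem_nhds hx)).hasDerivAt
  set Q : ℝ → ℝ := fun x => deriv h x / x with hQdef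
  have hHDd : ∀ x ∈ Ioi (0:ℝ), HasDerivAt HD (Q x) x := by
    intro x hx
    have hx0 : x ≠ 0 := ne_of_gt hx
    have h1 : HasDerivAt (fun u => h u / u) ((deriv h x * x - h x * 1) / x ^ 2) x :=
      (hdh x hx).div (hasDerivAt_id x) hx0
    have h2 := (hIder x hx).add h1
    have h3 : f x + (deriv h x * x - h x * 1) / x ^ 2 = Q x := by
      simp only [hfdef, hQdef, mul_one]
      field_simp
      ring
    rwa [h3] at h2
  have hQcont : ContinuousOn Q (Ioi 0) :=
    (hcd.continuousOn_deriv_of_isOpen isOpen_Ioi one_le_two).div continuousOn_id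
      (fun x hx => ne_of_gt hx)
  have hQpos : ∀ x ∈ Ioi (0:ℝ), 0 < Q x := fun x hx => div_pos (hdpos x hx) hx
  have hHDmono : MonotoneOn HD (Ioi 0) :=
    monoOn_of_hasDerivAt (convex_Ioi 0) hHDd (fun x hx => (hQpos x hx).le)
  have hIccsub : Icc r₁ r₂ ⊆ Ioi 0 := fun z hz => lt_of_lt_of_le hr₁ hz.1
  -- minimum of Q on [r₁, r₂]
  obtain ⟨z₀, hz₀mem, hz₀min⟩ := isCompact_Icc.exists_isMinOn
    (Set.nonempty_Icc.2 (by linarith)) (hQcont.mono hIccsub)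
  set c : ℝ := Q z₀ with hcdef
  have hcpos : 0 < c := hQpos z₀ (hIccsub hz₀mem)
  have hcmin : ∀ x ∈ Icc r₁ r₂, c ≤ Q x := fun x hx => hz₀min hx
  have hab_sub : Icc a b ⊆ Icc r₁ r₂ := fun x hx => ⟨by linarith [hx.1], by linarith [hx.2]⟩
  -- quadratic lower bound on [r₁, r₂]
  have hquad : ∀ r ∈ Icc a b, ∀ ρ ∈ Icc r₁ r₂,
      c/2 * (ρ - r)^2 ≤ H ρ - H r - HD r * (ρ - r) := by
    intro r hr ρ hρ
    have hrIcc : r ∈ Icc r₁ r₂ := hab_sub hr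
    have hd2 : ∀ x ∈ Icc r₁ r₂,
        HasDerivAt (fun x => H x - c/2*(x - r)^2) (HD x - c*(x - r)) x := by
      intro x hx
      have h2 : HasDerivAt (fun x : ℝ => c/2*(x - r)^2) (c*(x - r)) x := by
        have h3 : HasDerivAt (fun x : ℝ => (x - r)^2) (2*(x-r)) x := by
          exact (((hasDerivAt_id x).sub_const r).pow 2).congr_deriv (by norm_num)
        have h4 := h3.const_mul (c/2)
        exact h4.congr_deriv (by ring)
      exact (hHder x (hIccsub hx)).sub h2
    have hd2' : ∀ x ∈ Icc r₁ r₂,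
        HasDerivAt (fun x => HD x - c*(x - r)) (Q x - c) x := by
      intro x hx
      have h2 : HasDerivAt (fun x : ℝ => c*(x - r)) c x := by
        simpa using ((hasDerivAt_id x).sub_const r).const_mul c
      exact (hHDd x (hIccsub hx)).sub h2
    have hmono : MonotoneOn (fun x => HD x - c*(x - r)) (Icc r₁ r₂) :=
      monoOn_of_hasDerivAt (convex_Icc _ _) hd2'
        (fun x hx => sub_nonneg.2 (hcmin x hx))
    have ht := tangent_line_le (convex_Icc _ _) hd2 hmono hrIcc hρ
    simp only [sub_self] at ht
    nlinarith [ht]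
  -- g r = fun ρ => H ρ - HD r * ρ : derivative facts
  have hgd : ∀ r : ℝ, ∀ ρ ∈ Ioi (0:ℝ),
      HasDerivAt (fun ρ => H ρ - HD r * ρ) (HD ρ - HD r) ρ := by
    intro r ρ hρ
    have := (hHder ρ hρ).sub ((hasDerivAt_id ρ).const_mul (HD r))
    simp only [mul_one] at this
    exact this
  -- low side: antitone on (0, r₁]
  have hganti : ∀ r ∈ Icc a b, AntitoneOn (fun ρ => H ρ - HD r * ρ) (Ioc 0 r₁) := by
    intro r hr
    apply antiOn_of_hasDerivAt (convex_Ioc 0 r₁) (fun ρ hρ => hgd r ρ hρ.1)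
    intro ρ hρ
    have h1 : HD ρ ≤ HD r₁ := hHDmono hρ.1 (by exact hr₁) hρ.2
    have h2 : HD r₁ ≤ HD r := hHDmono (by exact hr₁) (lt_trans hr₁ (lt_of_lt_of_le h₁a hr.1))
      (by linarith [hr.1])
    linarith
  -- high side: monotone on [r₂, ∞)
  have hgmono : ∀ r ∈ Icc a b, MonotoneOn (fun ρ => H ρ - HD r * ρ) (Ici r₂) := by
    intro r hr
    apply monoOn_of_hasDerivAt (convex_Ici r₂)
      (fun ρ hρ => hgd r ρ (lt_of_lt_of_le hr₂pos hρ))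
    intro ρ hρ
    have hrpos : (0:ℝ) < r := lt_trans hr₁ (lt_of_lt_of_le h₁a hr.1)
    have h1 : HD r ≤ HD r₂ := hHDmono hrpos hr₂pos (by linarith [hr.2])
    have h2 : HD r₂ ≤ HD ρ := hHDmono hr₂pos (lt_of_lt_of_le hr₂pos hρ) hρ
    linarith
  -- far field constant
  obtain ⟨R₀, hR₀⟩ := Filter.eventually_atTop.mp
    (htend.eventually (eventually_ge_nhds (by linarith : hinf/2 < hinf)))
  set R : ℝ := max R₀ (max 1 r₂) with hRdef
  have hR1 : (1:ℝ) ≤ R := le_trans (le_max_left 1 r₂) (le_max_right _ _)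
  have hRr₂ : r₂ ≤ R := le_trans (le_max_right 1 r₂) (le_max_right _ _)
  have hRpos : (0:ℝ) < R := lt_of_lt_of_le one_pos hR1
  have hQlow : ∀ s : ℝ, R ≤ s → hinf/2 * s^(γ-2) ≤ Q s := by
    intro s hs
    have hspos : 0 < s := lt_of_lt_of_le hRpos hs
    have h1 : hinf/2 ≤ deriv h s / s^(γ-1) := hR₀ s (le_trans (le_max_left _ _) hs)
    have hp : (0:ℝ) < s^(γ-1) := Real.rpow_pos_of_pos hspos _
    have h2 : hinf/2 * s^(γ-1) ≤ deriv h s := (le_div_iff₀ hp).mp h1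
    have h3 : s^(γ-(2:ℝ)) = s^(γ-1) / s := by
      have : γ - 2 = (γ-1) - 1 := by ring
      rw [this, Real.rpow_sub hspos, Real.rpow_one]
    rw [h3]
    rw [mul_div_assoc'] 
    exact (div_le_div_iff_of_pos_right hspos).mpr h2
  set cδ : ℝ := hinf/2/(γ*(γ-1)) with hcδdef
  have hcδpos : 0 < cδ := by
    apply div_pos (by linarith)
    positivity
  have hcδid : ∀ p : ℝ, cδ * (γ*(γ-1)*p) = hinf/2 * p := by
    intro p
    rw [hcδdef]
    field_simp
  -- far field tangent bound: for ρ ≥ R,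
  have hfar : ∀ r ∈ Icc a b, ∀ ρ, R ≤ ρ →
      (H R - HD r * R) + cδ*(ρ^γ - R^γ - γ*R^(γ-1)*(ρ - R)) ≤ H ρ - HD r * ρ := by
    intro r hr ρ hρR
    have hrpos : (0:ℝ) < r := lt_trans hr₁ (lt_of_lt_of_le h₁a hr.1)
    have hIciPos : ∀ x : ℝ, x ∈ Ici R → (0:ℝ) < x := fun x hx => lt_of_lt_of_le hRpos hx
    set F : ℝ → ℝ := fun x => H x - HD r * x - cδ*(x^γ - γ*R^(γ-1)*x) with hFdef
    set F' : ℝ → ℝ := fun x => HD x - HD r - cδ*(γ*x^(γ-1) - γ*R^(γ-1)) with hF'def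
    have hFd : ∀ x ∈ Ici R, HasDerivAt F (F' x) x := by
      intro x hx
      have hxpos := hIciPos x hx
      have h1 : HasDerivAt (fun x : ℝ => x^γ) (γ * x^(γ-1)) x :=
        Real.hasDerivAt_rpow_const (Or.inl (ne_of_gt hxpos))
      have h2 : HasDerivAt (fun x : ℝ => cδ*(x^γ - γ*R^(γ-1)*x))
          (cδ*(γ*x^(γ-1) - γ*R^(γ-1))) x := by
        have h3 := (h1.sub (((hasDerivAt_id x).const_mul (γ*R^(γ-1))))).const_mul cδ
        exact h3.congr_deriv (by ring)
      have h4 := ((hHder x hxpos).sub ((hasDerivAt_id x).const_mul (HD r))).sub h2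
      exact h4.congr_deriv (by ring)
    have hF'd : ∀ x ∈ Ici R, HasDerivAt F' (Q x - cδ*(γ*(γ-1)*x^(γ-2))) x := by
      intro x hx
      have hxpos := hIciPos x hx
      have h1 : HasDerivAt (fun x : ℝ => x^(γ-1)) ((γ-1) * x^(γ-1-1)) x :=
        Real.hasDerivAt_rpow_const (Or.inl (ne_of_gt hxpos))
      have hex : γ - 1 - 1 = γ - 2 := by ring
      rw [hex] at h1
      have h2 : HasDerivAt (fun x : ℝ => cδ*(γ*x^(γ-1) - γ*R^(γ-1)))
          (cδ*(γ*(γ-1)*x^(γ-2))) x := by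
        have h3 := ((h1.const_mul γ).sub_const (γ*R^(γ-1))).const_mul cδ
        exact h3.congr_deriv (by ring)
      have h4 := ((hHDd x hxpos).sub_const (HD r)).sub h2
      exact h4
    have hF'mono : MonotoneOn F' (Ici R) := by
      apply monoOn_of_hasDerivAt (convex_Ici R) hF'd
      intro x hx
      have h5 := hQlow x hx
      rw [hcδid]
      linarith
    have ht := tangent_line_le (convex_Ici R) hFd hF'mono (le_refl R : R ∈ Ici R) hρR
    have hF'R : F' R = HD R - HD r := by
      simp only [hF'def]
      ring
    have hF'Rnn : 0 ≤ F' R := by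
      rw [hF'R]
      have := hHDmono hrpos hRpos (by linarith [hr.2])
      linarith
    have h6 : F R ≤ F ρ := by
      have h7 : 0 ≤ F' R * (ρ - R) := mul_nonneg hF'Rnn (by linarith)
      linarith
    simp only [hFdef] at h6
    nlinarith [h6]
  -- threshold T beyond which ψ dominates ρ^γ / 2
  set C₂ : ℝ := γ*R^(γ-1) with hC₂def
  have hC₂pos : 0 < C₂ := mul_pos hγ0 (Real.rpow_pos_of_pos hRpos _)
  set T : ℝ := max R (max 1 ((2*C₂)^((γ-1)⁻¹))) with hTdef
  have hTR : R ≤ T := le_max_left _ _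
  have hT1 : (1:ℝ) ≤ T := le_trans (le_max_left 1 _) (le_max_right _ _)
  have hTpos : (0:ℝ) < T := lt_of_lt_of_le one_pos hT1
  have hψ : ∀ ρ : ℝ, T ≤ ρ → 1/2*ρ^γ ≤ ρ^γ - R^γ - C₂*(ρ - R) := by
    intro ρ hρT
    have hρpos : (0:ℝ) < ρ := lt_of_lt_of_le hTpos hρT
    have hρC : (2*C₂)^((γ-1)⁻¹) ≤ ρ :=
      le_trans (le_trans (le_max_right 1 _) (le_max_right R _)) hρT
    have h2C : (0:ℝ) ≤ 2*C₂ := by linarith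
    have hpow : 2*C₂ ≤ ρ^(γ-1) := by
      have h1 : ((2*C₂)^((γ-1)⁻¹))^(γ-1) ≤ ρ^(γ-1) :=
        Real.rpow_le_rpow (Real.rpow_nonneg h2C _) hρC (by linarith)
      have h2 : ((2*C₂)^((γ-1)⁻¹) : ℝ)^(γ-1) = 2*C₂ := by
        rw [← Real.rpow_mul h2C, inv_mul_cancel₀ (ne_of_gt hγ1), Real.rpow_one]
      rw [h2] at h1
      exact h1
    have hρmul : ρ^(γ-1) * ρ = ρ^γ := by
      have h3 : ρ^(γ-1) * ρ^(1:ℝ) = ρ^γ := by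
        rw [← Real.rpow_add hρpos]; norm_num
      simpa [Real.rpow_one] using h3
    have hRmul : R^(γ-1) * R = R^γ := by
      have h3 : R^(γ-1) * R^(1:ℝ) = R^γ := by
        rw [← Real.rpow_add hRpos]; norm_num
      simpa [Real.rpow_one] using h3
    have hRγpos : (0:ℝ) < R^γ := Real.rpow_pos_of_pos hRpos γ
    have h5 : 2*C₂*ρ ≤ ρ^γ := by nlinarith [hpow, hρpos, hρmul]
    have h6 : C₂*R = γ*R^γ := by rw [hC₂def, mul_assoc, hRmul]
    have h7 : R^γ ≤ γ*R^γ := by nlinarith [hRγpos, hγ1]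
    have e : C₂*(ρ - R) = C₂*ρ - C₂*R := by ring
    linarith [h5, h6, h7, e]
  -- quantities for the outer bounds
  set m₁ : ℝ := c/2*(a-r₁)^2 with hm₁def
  set m₂ : ℝ := c/2*(r₂-b)^2 with hm₂def
  have hm₁pos : 0 < m₁ := by
    have h9 : (0:ℝ) < (a - r₁)^2 := pow_pos (by linarith) 2
    rw [hm₁def]; exact mul_pos (by linarith) h9
  have hm₂pos : 0 < m₂ := by
    have h9 : (0:ℝ) < (r₂ - b)^2 := pow_pos (by linarith) 2
    rw [hm₂def]; exact mul_pos (by linarith) h9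
  have hEr₁ : ∀ r ∈ Icc a b, m₁ ≤ H r₁ - H r - HD r * (r₁ - r) := by
    intro r hr
    have hq := hquad r hr r₁ ⟨le_refl r₁, by linarith⟩
    have hsq : (a - r₁)^2 ≤ (r₁ - r)^2 := by
      nlinarith [mul_nonneg (sub_nonneg.2 hr.1) (by linarith [hr.1] : (0:ℝ) ≤ r + a - 2*r₁)]
    rw [hm₁def]
    nlinarith [hq, hsq, hcpos]
  have hEr₂ : ∀ r ∈ Icc a b, m₂ ≤ H r₂ - H r - HD r * (r₂ - r) := by
    intro r hr
    have hq := hquad r hr r₂ ⟨by linarith, le_refl r₂⟩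
    have hsq : (r₂ - b)^2 ≤ (r₂ - r)^2 := by
      nlinarith [mul_nonneg (sub_nonneg.2 hr.2) (by linarith [hr.2] : (0:ℝ) ≤ 2*r₂ - r - b)]
    rw [hm₂def]
    nlinarith [hq, hsq, hcpos]
  -- lower region bound, including ρ = 0 by continuity
  have hElow : ∀ r ∈ Icc a b, ∀ ρ : ℝ, 0 ≤ ρ → ρ < r₁ →
      m₁ ≤ H ρ - H r - HD r * (ρ - r) := by
    intro r hr ρ hρ0 hρr₁
    have hpos_case : ∀ ρ' ∈ Ioc (0:ℝ) r₁, m₁ ≤ H ρ' - H r - HD r * (ρ' - r) := by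
      intro ρ' hρ'
      have h1 := hganti r hr hρ' (⟨hr₁, le_refl r₁⟩ : r₁ ∈ Ioc 0 r₁) hρ'.2
      simp only at h1
      have h2 := hEr₁ r hr
      have e1 : H ρ' - H r - HD r*(ρ' - r) = (H ρ' - HD r*ρ') - (H r - HD r*r) := by ring
      have e2 : H r₁ - H r - HD r*(r₁ - r) = (H r₁ - HD r*r₁) - (H r - HD r*r) := by ring
      linarith [h1, h2, e1, e2]
    rcases eq_or_lt_of_le hρ0 with h0' | hρpos
    · have hlim : Tendsto (fun ρ => H ρ - H r - HD r * (ρ - r)) (nhdsWithin 0 (Ioi 0))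
          (nhds (H 0 - H r - HD r * (0 - r))) := by
        apply Tendsto.sub (hH0.sub tendsto_const_nhds)
        exact ((continuous_const.mul (continuous_id.sub continuous_const)).tendsto 0).mono_left
          nhdsWithin_le_nhds
      have hev2 : ∀ᶠ ρ' in nhdsWithin (0:ℝ) (Ioi 0), m₁ ≤ H ρ' - H r - HD r * (ρ' - r) := by
        filter_upwards [self_mem_nhdsWithin, nhdsWithin_le_nhds (Iio_mem_nhds hr₁)] with ρ' hp1 hp2
        exact hpos_case ρ' ⟨hp1, le_of_lt hp2⟩
      have h3 := ge_of_tendsto hlim hev2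
      rw [← h0']
      exact h3
    · exact hpos_case ρ ⟨hρpos, le_of_lt hρr₁⟩
  -- the constant
  have h1r₁ : (0:ℝ) < 1 + r₁^γ := by
    have := Real.rpow_nonneg hr₁.le γ
    linarith
  have h1T : (0:ℝ) < 1 + T^γ := by
    have := Real.rpow_nonneg hTpos.le γ
    linarith
  set k₅ : ℝ := m₁/(1+r₁^γ) with hk₅def
  set k₄ : ℝ := m₂/(1+T^γ) with hk₄def
  set k₃ : ℝ := min m₂ (cδ/2) with hk₃def
  have hk₅pos : 0 < k₅ := div_pos hm₁pos h1r₁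
  have hk₄pos : 0 < k₄ := div_pos hm₂pos h1T
  have hk₃pos : 0 < k₃ := lt_min hm₂pos (by linarith)
  refine ⟨min (min (c/2) k₅) (min k₃ k₄), lt_min (lt_min (by linarith) hk₅pos) (lt_min hk₃pos hk₄pos), ?_⟩
  intro r hr ρ hρ0
  have hrpos : (0:ℝ) < r := lt_trans hr₁ (lt_of_lt_of_le h₁a hr.1)
  set kh : ℝ := min (min (c/2) k₅) (min k₃ k₄) with hkhdef
  have hkhpos : 0 < kh := lt_min (lt_min (by linarith) hk₅pos) (lt_min hk₃pos hk₄pos)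
  have hργnn : (0:ℝ) ≤ ρ^γ := Real.rpow_nonneg hρ0 γ
  constructor
  · intro hρIcc
    rw [hderivH r (mem_Ioi.mpr hrpos), sq_abs]
    have hq := hquad r hr ρ hρIcc
    have hkc : kh ≤ c/2 := le_trans (min_le_left _ _) (min_le_left _ _)
    calc kh * (ρ - r)^2 ≤ c/2 * (ρ - r)^2 :=
          mul_le_mul_of_nonneg_right hkc (sq_nonneg (ρ - r))
      _ ≤ _ := hq
  · intro hcase
    rw [hderivH r (mem_Ioi.mpr hrpos)]
    rcases hcase with hlt | hgt
    · have hE := hElow r hr ρ hρ0 hlt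
      have hργ : ρ^γ ≤ r₁^γ := Real.rpow_le_rpow hρ0 hlt.le hγ0.le
      have hk : kh ≤ k₅ := le_trans (min_le_left _ _) (min_le_right _ _)
      calc kh * (1 + ρ^γ) ≤ k₅ * (1 + ρ^γ) :=
            mul_le_mul_of_nonneg_right hk (by linarith)
        _ ≤ k₅ * (1 + r₁^γ) := mul_le_mul_of_nonneg_left (by linarith) hk₅pos.le
        _ = m₁ := by rw [hk₅def]; field_simp
        _ ≤ _ := hE
    · have hρpos : (0:ℝ) < ρ := lt_trans hr₂pos hgt
      have hE2 := hEr₂ r hr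
      have e2 : H r₂ - H r - HD r*(r₂ - r) = (H r₂ - HD r*r₂) - (H r - HD r*r) := by ring
      have eρ : H ρ - H r - HD r*(ρ - r) = (H ρ - HD r*ρ) - (H r - HD r*r) := by ring
      rcases le_total ρ T with hle | hge
      · have hm := hgmono r hr (mem_Ici.2 (le_refl r₂)) (mem_Ici.2 hgt.le) hgt.le
        simp only at hm
        have hEρ : m₂ ≤ H ρ - H r - HD r * (ρ - r) := by linarith [hm, hE2, e2, eρ]
        have hργ : ρ^γ ≤ T^γ := Real.rpow_le_rpow hρ0 hle hγ0.le
        have hk : kh ≤ k₄ := le_trans (min_le_right _ _) (min_le_right _ _)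
        calc kh * (1 + ρ^γ) ≤ k₄ * (1 + ρ^γ) :=
              mul_le_mul_of_nonneg_right hk (by linarith)
          _ ≤ k₄ * (1 + T^γ) := mul_le_mul_of_nonneg_left (by linarith) hk₄pos.le
          _ = m₂ := by rw [hk₄def]; field_simp
          _ ≤ _ := hEρ
      · have hRρ : R ≤ ρ := le_trans hTR hge
        have h1 := hfar r hr ρ hRρ
        rw [hC₂def] at h1
        have h2 := hψ ρ hge
        rw [hC₂def] at h2
        have hm := hgmono r hr (mem_Ici.2 (le_refl r₂)) (mem_Ici.2 hRr₂) hRr₂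
        simp only at hm
        have eR : H R - H r - HD r*(R - r) = (H R - HD r*R) - (H r - HD r*r) := by ring
        have hER : m₂ ≤ H R - H r - HD r * (R - r) := by linarith [hm, hE2, e2, eR]
        have hcδψ : cδ*(1/2*ρ^γ) ≤ cδ*(ρ^γ - R^γ - γ*R^(γ-1)*(ρ - R)) :=
          mul_le_mul_of_nonneg_left h2 hcδpos.le
        have hk3 : kh ≤ k₃ := le_trans (min_le_right _ _) (min_le_left _ _)
        have hkm₂ : kh ≤ m₂ := le_trans hk3 (min_le_left _ _)
        have hkcδ : kh ≤ cδ/2 := le_trans hk3 (min_le_right _ _)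
        have hkρ : kh * ρ^γ ≤ cδ/2 * ρ^γ := mul_le_mul_of_nonneg_right hkcδ hργnn
        have ecδ : cδ*(1/2*ρ^γ) = cδ/2 * ρ^γ := by ring
        have ekh : kh * (1 + ρ^γ) = kh + kh * ρ^γ := by ring
        have s1 : kh + kh*ρ^γ ≤ m₂ + cδ/2*ρ^γ := add_le_add hkm₂ hkρ
        have s2 : m₂ + cδ/2*ρ^γ ≤
            (H R - H r - HD r*(R - r)) + cδ*(ρ^γ - R^γ - γ*R^(γ-1)*(ρ - R)) :=
          add_le_add hER (by linarith [hcδψ, ecδ])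
        have s3 : (H R - H r - HD r*(R - r)) + cδ*(ρ^γ - R^γ - γ*R^(γ-1)*(ρ - R)) ≤
            H ρ - H r - HD r*(ρ - r) := by linarith [h1, eR, eρ]
        linarith [s1, s2, s3, ekh]
end

section
/- Fix γ ∈ (1,∞), let h be an admissible monotone pressure for exponent γ with pressure potential H (extended continuously to r = 0), and let 0 < r₁ < a < b < r₂ < ∞. Then there exists a constant K_h > 0, depending only on r₁, r₂, a, b and h, such that for every r ∈ [a,b] and every ρ ∈ [0,∞) one has |h(ρ) − h(r) − h′(r)(ρ − r)| ≤ K_h · (H(ρ) − H(r) − H′(r)(ρ − r)). -/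
open Set


set_option maxHeartbeats 1600000 in
/-- Fix `γ ∈ (1,∞)`, let `h` be an admissible monotone pressure for exponent `γ` with
pressure potential `H` (extended continuously to `r = 0`), and let
`0 < r₁ < a < b < r₂ < ∞`. Then there exists `K_h > 0`, depending only on
`r₁, r₂, a, b` and `h`, such that for every `r ∈ [a,b]` and every `ρ ∈ [0,∞)` one has
`|h ρ − h r − h′ r * (ρ − r)| ≤ K_h * (H ρ − H r − H′ r * (ρ − r))`. -/
theorem pressure_controlled_by_relative_entropy
    (γ : ℝ) (hγ : 1 < γ)
    (h : ℝ → ℝ) (hh : AdmissibleMonotonePressure γ h)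
    (H : ℝ → ℝ)
    (hH : ∀ r ∈ Set.Ioi (0 : ℝ), H r = r * ∫ z in (1 : ℝ)..r, h z / z ^ 2)
    (hH0 : Filter.Tendsto H (nhdsWithin 0 (Set.Ioi (0 : ℝ))) (nhds (H 0)))
    (r₁ a b r₂ : ℝ) (hr₁ : 0 < r₁) (h₁a : r₁ < a) (hab : a < b) (hbr₂ : b < r₂) :
    ∃ Kh : ℝ, 0 < Kh ∧
      ∀ r ∈ Set.Icc a b, ∀ ρ : ℝ, 0 ≤ ρ →
        |h ρ - h r - deriv h r * (ρ - r)| ≤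
          Kh * (H ρ - H r - deriv H r * (ρ - r)) := by
  obtain ⟨hc, hC2, h0, hpos, hinf, hinfpos, htail⟩ := hh
  have ha0 : 0 < a := hr₁.trans h₁a
  have hb0 : 0 < b := ha0.trans hab
  have hr₂0 : 0 < r₂ := hb0.trans hbr₂
  -- differentiability facts for h
  have hcIoi : ContinuousOn h (Ioi 0) := hc.mono Ioi_subset_Ici_self
  have hder : ∀ x ∈ Ioi (0:ℝ), HasDerivAt h (deriv h x) x := by
    intro x hx
    exact ((hC2.differentiableOn (by norm_num)).differentiableAt
      (isOpen_Ioi.mem_nhds hx)).hasDerivAt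
  have hC1d : ContDiffOn ℝ 1 (deriv h) (Ioi 0) :=
    hC2.deriv_of_isOpen isOpen_Ioi (by norm_num)
  have hdcont : ContinuousOn (deriv h) (Ioi 0) :=
    hC2.continuousOn_deriv_of_isOpen isOpen_Ioi (by norm_num)
  have hd2 : ∀ x ∈ Ioi (0:ℝ), HasDerivAt (deriv h) (deriv (deriv h) x) x := by
    intro x hx
    exact ((hC1d.differentiableOn (by norm_num)).differentiableAt
      (isOpen_Ioi.mem_nhds hx)).hasDerivAt
  have hd2cont : ContinuousOn (deriv (deriv h)) (Ioi 0) :=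
    hC1d.continuousOn_deriv_of_isOpen isOpen_Ioi (by norm_num)
  -- the integral function G and Hd = deriv H
  set G : ℝ → ℝ := fun r => ∫ z in (1:ℝ)..r, h z / z ^ 2 with hGdef
  have hIntCont : ContinuousOn (fun z : ℝ => h z / z ^ 2) (Ioi 0) := by
    apply hcIoi.div (continuousOn_pow 2)
    intro z hz; exact pow_ne_zero 2 (ne_of_gt hz)
  have hGd : ∀ x ∈ Ioi (0:ℝ), HasDerivAt G (h x / x ^ 2) x := by
    intro x hx
    refine intervalIntegral.integral_hasDerivAt_right ?_ ?_ ?_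
    · apply ContinuousOn.intervalIntegrable
      apply hIntCont.mono
      intro z hz
      rw [Set.uIcc] at hz
      exact lt_of_lt_of_le (lt_min one_pos hx) hz.1
    · exact hIntCont.stronglyMeasurableAtFilter isOpen_Ioi x hx
    · exact hIntCont.continuousAt (isOpen_Ioi.mem_nhds hx)
  set Hd : ℝ → ℝ := fun x => G x + h x / x with hHdDef
  have hHD : ∀ x ∈ Ioi (0:ℝ), HasDerivAt H (Hd x) x := by
    intro x hx
    have hev : (fun y => y * G y) =ᶠ[nhds x] H := by
      filter_upwards [isOpen_Ioi.mem_nhds hx] with y hy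
      exact (hH y hy).symm
    have : HasDerivAt (fun y => y * G y) (1 * G x + x * (h x / x ^ 2)) x :=
      (hasDerivAt_id x).mul (hGd x hx)
    refine (this.congr_of_eventuallyEq hev.symm).congr_deriv ?_
    have hx0 : (x:ℝ) ≠ 0 := ne_of_gt hx
    show 1 * G x + x * (h x / x ^ 2) = G x + h x / x
    field_simp
  have hHdD : ∀ x ∈ Ioi (0:ℝ), HasDerivAt Hd (deriv h x / x) x := by
    intro x hx
    have hx0 : (x:ℝ) ≠ 0 := ne_of_gt hx
    have h1 : HasDerivAt (fun y => h y / y) ((deriv h x * x - h x * 1) / x ^ 2) x :=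
      (hder x hx).div (hasDerivAt_id x) hx0
    have := (hGd x hx).add h1
    refine this.congr_deriv ?_
    field_simp
    ring
  have hHderiv : ∀ x ∈ Ioi (0:ℝ), deriv H x = Hd x := fun x hx => (hHD x hx).deriv
  have hHdMono : StrictMonoOn Hd (Ioi 0) := by
    apply strictMonoOn_of_deriv_pos (convex_Ioi 0)
    · exact fun x hx => ((hHdD x hx).continuousAt).continuousWithinAt
    · intro x hx
      rw [interior_Ioi] at hx
      rw [(hHdD x hx).deriv]
      exact div_pos (hpos x hx) hx
  have hHcont : ContinuousOn H (Ici 0) := by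
    intro x hx
    rcases eq_or_lt_of_le (mem_Ici.1 hx) with rfl | hx'
    · rw [ContinuousWithinAt]
      have : Ici (0:ℝ) = insert 0 (Ioi 0) := by
        rw [← Ioi_insert]
      rw [this, nhdsWithin_insert]
      rw [Filter.tendsto_sup]
      exact ⟨tendsto_pure_nhds H 0, hH0⟩
    · exact ((hHD x hx').continuousAt).continuousWithinAt
  -- inclusions
  have hsubIoi : Icc r₁ r₂ ⊆ Ioi (0:ℝ) := fun x hx => lt_of_lt_of_le hr₁ hx.1
  have habsub : Icc a b ⊆ Icc r₁ r₂ := Icc_subset_Icc (le_of_lt h₁a) (le_of_lt hbr₂)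
  have habIoi : Icc a b ⊆ Ioi (0:ℝ) := fun x hx => lt_of_lt_of_le ha0 hx.1
  -- bound for deriv h on [a,b]
  obtain ⟨Mab0, hMab0⟩ := (isCompact_Icc : IsCompact (Icc a b)).exists_bound_of_continuousOn
      (hdcont.mono habIoi)
  set Mab := max Mab0 1 with hMabdef
  have hMabpos : 0 < Mab := lt_of_lt_of_le one_pos (le_max_right _ _)
  have hMab : ∀ x ∈ Icc a b, |deriv h x| ≤ Mab := by
    intro x hx
    calc |deriv h x| = ‖deriv h x‖ := (Real.norm_eq_abs _).symm
    _ ≤ Mab0 := hMab0 x hx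
    _ ≤ Mab := le_max_left _ _
  -- bound for h on [0, r₂]
  obtain ⟨Ch0, hCh0⟩ := (isCompact_Icc : IsCompact (Icc (0:ℝ) r₂)).exists_bound_of_continuousOn
      (hc.mono (fun x hx => hx.1))
  set Ch := max Ch0 0 with hChdef
  have hCh : ∀ x ∈ Icc (0:ℝ) r₂, |h x| ≤ Ch := by
    intro x hx
    calc |h x| = ‖h x‖ := (Real.norm_eq_abs _).symm
    _ ≤ Ch0 := hCh0 x hx
    _ ≤ Ch := le_max_left _ _
  have hChnn : 0 ≤ Ch := le_max_right _ _
  -- bound for second derivative on [r₁, r₂]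
  obtain ⟨M0, hM0⟩ := (isCompact_Icc : IsCompact (Icc r₁ r₂)).exists_bound_of_continuousOn
      (hd2cont.mono hsubIoi)
  set M := max M0 0 with hMdef
  have hMnn : 0 ≤ M := le_max_right _ _
  -- Lipschitz bound for deriv h on [r₁, r₂]
  have hLip : ∀ x ∈ Icc r₁ r₂, ∀ y ∈ Icc r₁ r₂, |deriv h y - deriv h x| ≤ M * |y - x| := by
    intro x hx y hy
    have := Convex.norm_image_sub_le_of_norm_hasDerivWithin_le
      (f := deriv h) (f' := deriv (deriv h)) (s := Icc r₁ r₂) (C := M)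
      (fun z hz => (hd2 z (hsubIoi hz)).hasDerivWithinAt)
      (fun z hz => le_trans (hM0 z hz) (le_max_left _ _)) (convex_Icc _ _) hx hy
    simpa [Real.norm_eq_abs] using this
  -- lower bound for Hd increments on [r₁, r₂]
  obtain ⟨s₀, hs₀mem, hs₀min⟩ := (isCompact_Icc : IsCompact (Icc r₁ r₂)).exists_isMinOn
      ⟨r₁, le_refl r₁, le_of_lt (lt_trans h₁a (lt_trans hab hbr₂))⟩
      ((hdcont.mono hsubIoi).div (continuousOn_id) (fun z hz => ne_of_gt (hsubIoi hz)))
  set m := deriv h s₀ / s₀ with hmdef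
  have hmpos : 0 < m := div_pos (hpos s₀ (hsubIoi hs₀mem)) (hsubIoi hs₀mem)
  have hmmin : ∀ z ∈ Icc r₁ r₂, m ≤ deriv h z / z := fun z hz => hs₀min hz
  have hHdLB : ∀ x y, r₁ ≤ x → x ≤ y → y ≤ r₂ → m * (y - x) ≤ Hd y - Hd x := by
    intro x y hx hxy hy
    have hmono : MonotoneOn (fun s => Hd s - m * s) (Icc r₁ r₂) := by
      apply monotoneOn_of_deriv_nonneg (convex_Icc _ _)
      · intro z hz
        exact (((hHdD z (hsubIoi hz)).continuousAt).sub
          (continuousAt_const.mul continuousAt_id)).continuousWithinAt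
      · intro z hz
        rw [interior_Icc] at hz
        have hz' : z ∈ Icc r₁ r₂ := Ioo_subset_Icc_self hz
        exact ((hHdD z (hsubIoi hz')).sub
          ((hasDerivAt_id z).const_mul m)).differentiableAt.differentiableWithinAt
      · intro z hz
        rw [interior_Icc] at hz
        have hz' : z ∈ Icc r₁ r₂ := Ioo_subset_Icc_self hz
        have hD : HasDerivAt (fun s => Hd s - m * s) (deriv h z / z - m) z := by
          exact ((hHdD z (hsubIoi hz')).sub ((hasDerivAt_id' z).const_mul m)).congr_deriv (by ring)
        rw [hD.deriv]
        have := hmmin z hz'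
        linarith
    have := hmono ⟨hx, le_trans hxy hy⟩ ⟨le_trans hx hxy, hy⟩ hxy
    simp only [] at this
    linarith
  -- c₂ : uniform gap Hd r₂ - Hd b
  set c₂ := Hd r₂ - Hd b with hc₂def
  have hc₂pos : 0 < c₂ := sub_pos.2 (hHdMono hb0 hr₂0 hbr₂)
  -- tail bounds A, B
  obtain ⟨T₀, hT₀⟩ := Filter.eventually_atTop.1
    ((htail.eventually_const_le (show hinf/2 < hinf by linarith)).and
     (htail.eventually_le_const (show hinf < hinf + 1 by linarith)))
  set T := max T₀ r₂ with hTdef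
  have hr₂T : r₂ ≤ T := le_max_right _ _
  have hq2cont : ContinuousOn (fun t : ℝ => deriv h t / t ^ (γ - 1)) (Icc r₂ T) := by
    apply ContinuousOn.div
    · exact hdcont.mono (fun x hx => lt_of_lt_of_le hr₂0 hx.1)
    · intro x hx
      exact (Real.continuousAt_rpow_const x (γ-1)
        (Or.inl (ne_of_gt (lt_of_lt_of_le hr₂0 hx.1)))).continuousWithinAt
    · intro x hx
      exact ne_of_gt (Real.rpow_pos_of_pos (lt_of_lt_of_le hr₂0 hx.1) _)
  obtain ⟨t₁, ht₁mem, ht₁min⟩ := (isCompact_Icc : IsCompact (Icc r₂ T)).exists_isMinOn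
      ⟨r₂, le_refl _, hr₂T⟩ hq2cont
  obtain ⟨t₂, ht₂mem, ht₂max⟩ := (isCompact_Icc : IsCompact (Icc r₂ T)).exists_isMaxOn
      ⟨r₂, le_refl _, hr₂T⟩ hq2cont
  set B := min (deriv h t₁ / t₁ ^ (γ - 1)) (hinf/2) with hBdef
  set A := max (deriv h t₂ / t₂ ^ (γ - 1)) (hinf + 1) with hAdef
  have ht₁0 : 0 < t₁ := lt_of_lt_of_le hr₂0 ht₁mem.1
  have hBpos : 0 < B := by
    apply lt_min
    · exact div_pos (hpos t₁ ht₁0) (Real.rpow_pos_of_pos ht₁0 _)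
    · linarith
  have hApos : 0 < A := lt_of_lt_of_le (by linarith) (le_max_right _ _)
  have hB : ∀ t, r₂ ≤ t → B * t ^ (γ - 1) ≤ deriv h t := by
    intro t ht
    have ht0 : 0 < t := lt_of_lt_of_le hr₂0 ht
    have htp : 0 < t ^ (γ - 1) := Real.rpow_pos_of_pos ht0 _
    rcases le_total t T with hT | hT
    · have := ht₁min (⟨ht, hT⟩ : t ∈ Icc r₂ T)
      have h2 : B ≤ deriv h t / t ^ (γ - 1) := le_trans (min_le_left _ _) this
      calc B * t ^ (γ - 1) ≤ (deriv h t / t ^ (γ - 1)) * t ^ (γ - 1) :=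
            mul_le_mul_of_nonneg_right h2 (le_of_lt htp)
      _ = deriv h t := div_mul_cancel₀ _ (ne_of_gt htp)
    · have := (hT₀ t (le_trans (le_max_left _ _) hT)).1
      have h2 : B ≤ deriv h t / t ^ (γ - 1) := le_trans (min_le_right _ _) this
      calc B * t ^ (γ - 1) ≤ (deriv h t / t ^ (γ - 1)) * t ^ (γ - 1) :=
            mul_le_mul_of_nonneg_right h2 (le_of_lt htp)
      _ = deriv h t := div_mul_cancel₀ _ (ne_of_gt htp)
  have hA : ∀ t, r₂ ≤ t → deriv h t ≤ A * t ^ (γ - 1) := by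
    intro t ht
    have ht0 : 0 < t := lt_of_lt_of_le hr₂0 ht
    have htp : 0 < t ^ (γ - 1) := Real.rpow_pos_of_pos ht0 _
    rcases le_total t T with hT | hT
    · have := ht₂max (⟨ht, hT⟩ : t ∈ Icc r₂ T)
      have h2 : deriv h t / t ^ (γ - 1) ≤ A := le_trans this (le_max_left _ _)
      calc deriv h t = (deriv h t / t ^ (γ - 1)) * t ^ (γ - 1) :=
            (div_mul_cancel₀ _ (ne_of_gt htp)).symm
      _ ≤ A * t ^ (γ - 1) := mul_le_mul_of_nonneg_right h2 (le_of_lt htp)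
    · have := (hT₀ t (le_trans (le_max_left _ _) hT)).2
      have h2 : deriv h t / t ^ (γ - 1) ≤ A := le_trans this (le_max_right _ _)
      calc deriv h t = (deriv h t / t ^ (γ - 1)) * t ^ (γ - 1) :=
            (div_mul_cancel₀ _ (ne_of_gt htp)).symm
      _ ≤ A * t ^ (γ - 1) := mul_le_mul_of_nonneg_right h2 (le_of_lt htp)
  -- tail lower bound for Hd increments
  have hHdTail : ∀ t, r₂ ≤ t → B/(γ-1) * (t ^ (γ-1) - r₂ ^ (γ-1)) ≤ Hd t - Hd r₂ := by
    intro t ht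
    have hγ1 : (0:ℝ) < γ - 1 := by linarith
    have hmono : MonotoneOn (fun s => Hd s - B/(γ-1) * s ^ (γ-1)) (Icc r₂ t) := by
      apply monotoneOn_of_deriv_nonneg (convex_Icc _ _)
      · intro z hz
        have hz0 : 0 < z := lt_of_lt_of_le hr₂0 hz.1
        exact (((hHdD z hz0).continuousAt).sub (continuousAt_const.mul
          (Real.continuousAt_rpow_const z (γ-1) (Or.inl (ne_of_gt hz0))))).continuousWithinAt
      · intro z hz
        rw [interior_Icc] at hz
        have hz0 : 0 < z := lt_of_lt_of_le hr₂0 (le_of_lt hz.1)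
        exact ((hHdD z hz0).sub ((Real.hasDerivAt_rpow_const
          (Or.inl (ne_of_gt hz0))).const_mul (B/(γ-1)))).differentiableAt.differentiableWithinAt
      · intro z hz
        rw [interior_Icc] at hz
        have hz0 : 0 < z := lt_of_lt_of_le hr₂0 (le_of_lt hz.1)
        have hD : HasDerivAt (fun s => Hd s - B/(γ-1) * s ^ (γ-1))
            (deriv h z / z - B/(γ-1) * ((γ-1) * z ^ (γ-1-1))) z :=
          (hHdD z hz0).sub ((Real.hasDerivAt_rpow_const
            (Or.inl (ne_of_gt hz0))).const_mul (B/(γ-1)))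
        rw [hD.deriv]
        have hzpow : z ^ (γ-1-1) = z ^ (γ-1) / z := by
          rw [Real.rpow_sub hz0, Real.rpow_one]
        rw [hzpow]
        have hBz : B * z ^ (γ-1) ≤ deriv h z := hB z (le_of_lt hz.1)
        have e1 : B/(γ-1) * ((γ-1) * (z ^ (γ-1) / z)) = (B * z ^ (γ-1)) / z := by
          field_simp
        rw [e1]
        have : (B * z ^ (γ-1)) / z ≤ deriv h z / z := (div_le_div_iff_of_pos_right hz0).2 hBz
        linarith
    have := hmono (⟨le_refl _, ht⟩ : r₂ ∈ Icc r₂ t) (⟨ht, le_refl _⟩ : t ∈ Icc r₂ t) ht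
    simp only [] at this
    linarith
  have hγ1 : (0:ℝ) < γ - 1 := by linarith
  set K₁ := M/m + Mab/c₂ + A*(γ-1)/B + A*r₂^(γ-1)/c₂ with hK₁def
  have t1 : 0 ≤ M/m := div_nonneg hMnn hmpos.le
  have t2 : 0 < Mab/c₂ := div_pos hMabpos hc₂pos
  have t3 : 0 < A*(γ-1)/B := div_pos (mul_pos hApos hγ1) hBpos
  have t4 : 0 < A*r₂^(γ-1)/c₂ := div_pos (mul_pos hApos (Real.rpow_pos_of_pos hr₂0 _)) hc₂pos
  have hK₁pos : 0 < K₁ := by rw [hK₁def]; linarith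
  have claimA : ∀ r ∈ Icc a b, ∀ t, r₁ ≤ t →
      |deriv h t - deriv h r| ≤ K₁ * |Hd t - Hd r| := by
    intro r hr t ht
    have hr0 : 0 < r := habIoi hr
    have ht0 : 0 < t := lt_of_lt_of_le hr₁ ht
    have habs : (0:ℝ) ≤ |Hd t - Hd r| := abs_nonneg _
    rcases le_total t r₂ with htr₂ | htr₂
    · -- middle zone
      have htmem : t ∈ Icc r₁ r₂ := ⟨ht, htr₂⟩
      have hrmem : r ∈ Icc r₁ r₂ := habsub hr
      have l1 : |deriv h t - deriv h r| ≤ M * |t - r| := hLip r hrmem t htmem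
      have l2 : m * |t - r| ≤ |Hd t - Hd r| := by
        rcases le_total t r with htr | htr
        · have h1 : m * (r - t) ≤ Hd r - Hd t := hHdLB t r htmem.1 htr hrmem.2
          have h0' : (0:ℝ) ≤ m * (r - t) := mul_nonneg hmpos.le (by linarith)
          rw [abs_sub_comm t r, abs_sub_comm (Hd t) (Hd r),
            abs_of_nonneg (by linarith : (0:ℝ) ≤ r - t),
            abs_of_nonneg (by linarith : (0:ℝ) ≤ Hd r - Hd t)]
          exact h1
        · have h1 : m * (t - r) ≤ Hd t - Hd r := hHdLB r t hrmem.1 htr htmem.2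
          have h0' : (0:ℝ) ≤ m * (t - r) := mul_nonneg hmpos.le (by linarith)
          rw [abs_of_nonneg (by linarith : (0:ℝ) ≤ t - r),
            abs_of_nonneg (by linarith : (0:ℝ) ≤ Hd t - Hd r)]
          exact h1
      calc |deriv h t - deriv h r| ≤ M * |t - r| := l1
      _ = (M/m) * (m * |t - r|) := by
            have hm0 : m ≠ 0 := ne_of_gt hmpos
            field_simp
            try ring
      _ ≤ (M/m) * |Hd t - Hd r| := mul_le_mul_of_nonneg_left l2 t1
      _ ≤ K₁ * |Hd t - Hd r| := mul_le_mul_of_nonneg_right (by rw [hK₁def]; linarith) habs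
    · -- tail zone  r < r₂ ≤ t
      have hrt : r < t := lt_of_le_of_lt hr.2 (lt_of_lt_of_le hbr₂ htr₂)
      have hD0 : (0:ℝ) ≤ Hd t - Hd r := sub_nonneg.2 (le_of_lt (hHdMono hr0 ht0 hrt))
      have habsEq : |Hd t - Hd r| = Hd t - Hd r := abs_of_nonneg hD0
      have hDc₂ : c₂ ≤ Hd t - Hd r := by
        have h1 : Hd r ≤ Hd b := hHdMono.monotoneOn hr0 hb0 hr.2
        have h2 : Hd r₂ ≤ Hd t := hHdMono.monotoneOn hr₂0 ht0 htr₂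
        rw [hc₂def]; linarith
      rcases le_total (deriv h t) (deriv h r) with hcase | hcase
      · rw [abs_of_nonpos (by linarith), habsEq]
        have hb1 : deriv h r ≤ Mab := le_trans (le_abs_self _) (hMab r hr)
        have hb2 : 0 < deriv h t := hpos t ht0
        calc -(deriv h t - deriv h r) ≤ Mab := by linarith
        _ = (Mab/c₂) * c₂ := by field_simp
        _ ≤ (Mab/c₂) * (Hd t - Hd r) := mul_le_mul_of_nonneg_left hDc₂ t2.le
        _ ≤ K₁ * (Hd t - Hd r) := mul_le_mul_of_nonneg_right (by rw [hK₁def]; linarith) hD0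
      · rw [abs_of_nonneg (by linarith), habsEq]
        have hAt : deriv h t ≤ A * t ^ (γ-1) := hA t htr₂
        have htail1 : B/(γ-1) * (t ^ (γ-1) - r₂ ^ (γ-1)) ≤ Hd t - Hd r₂ := hHdTail t htr₂
        have h2 : Hd r ≤ Hd r₂ := hHdMono.monotoneOn hr0 hr₂0 (le_of_lt (lt_of_le_of_lt hr.2 hbr₂))
        have e2 : A * (t ^ (γ-1) - r₂ ^ (γ-1))
            = (A*(γ-1)/B) * (B/(γ-1) * (t ^ (γ-1) - r₂ ^ (γ-1))) := by
          field_simp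
        have b1 : A * (t ^ (γ-1) - r₂ ^ (γ-1)) ≤ (A*(γ-1)/B) * (Hd t - Hd r) := by
          rw [e2]
          exact mul_le_mul_of_nonneg_left (le_trans htail1 (by linarith)) t3.le
        have b2 : A * r₂ ^ (γ-1) ≤ (A*r₂^(γ-1)/c₂) * (Hd t - Hd r) :=
          calc A * r₂ ^ (γ-1) = (A*r₂^(γ-1)/c₂) * c₂ := by field_simp
          _ ≤ (A*r₂^(γ-1)/c₂) * (Hd t - Hd r) := mul_le_mul_of_nonneg_left hDc₂ t4.le
        have hb2 : 0 < deriv h r := hpos r hr0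
        calc deriv h t - deriv h r ≤ A * (t ^ (γ-1) - r₂ ^ (γ-1)) + A * r₂ ^ (γ-1) := by
              linarith
        _ ≤ (A*(γ-1)/B) * (Hd t - Hd r) + (A*r₂^(γ-1)/c₂) * (Hd t - Hd r) := add_le_add b1 b2
        _ ≤ K₁ * (Hd t - Hd r) := by
              rw [hK₁def]
              have e4 : (M/m + Mab/c₂ + A*(γ-1)/B + A*r₂^(γ-1)/c₂) * (Hd t - Hd r)
                  = (M/m) * (Hd t - Hd r) + (Mab/c₂) * (Hd t - Hd r)
                    + (A*(γ-1)/B) * (Hd t - Hd r) + (A*r₂^(γ-1)/c₂) * (Hd t - Hd r) := by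
                ring
              rw [e4]
              have p1 : 0 ≤ (M/m) * (Hd t - Hd r) := mul_nonneg t1 hD0
              have p2 : 0 ≤ (Mab/c₂) * (Hd t - Hd r) := mul_nonneg t2.le hD0
              linarith
  -- triangle helper
  have tri : ∀ x y : ℝ, |x - y| ≤ |x| + |y| := by
    intro x y
    rw [sub_eq_add_neg]
    exact (abs_add_le x (-y)).trans (by rw [abs_neg])
  -- uniform positive lower bound c₁ for the relative entropy at ρ = r₁
  have hE₁cont : ContinuousOn (fun r => H r₁ - H r - Hd r * (r₁ - r)) (Icc a b) := by
    apply ContinuousOn.sub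
    · apply ContinuousOn.sub continuousOn_const
      exact fun x hx => ((hHD x (habIoi hx)).continuousAt).continuousWithinAt
    · apply ContinuousOn.mul
      · exact fun x hx => ((hHdD x (habIoi hx)).continuousAt).continuousWithinAt
      · exact continuousOn_const.sub continuousOn_id
  obtain ⟨r₀, hr₀mem, hr₀min⟩ := (isCompact_Icc : IsCompact (Icc a b)).exists_isMinOn
    ⟨a, le_refl a, hab.le⟩ hE₁cont
  set c₁ := H r₁ - H r₀ - Hd r₀ * (r₁ - r₀) with hc₁def
  have hr₀0 : 0 < r₀ := habIoi hr₀mem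
  have hr₁r₀ : r₁ < r₀ := lt_of_lt_of_le h₁a hr₀mem.1
  have hc₁pos : 0 < c₁ := by
    have hanti : StrictAntiOn (fun x => H x - Hd r₀ * x) (Icc r₁ r₀) := by
      apply strictAntiOn_of_deriv_neg (convex_Icc _ _)
      · apply ContinuousOn.sub
        · exact fun x hx => ((hHD x (lt_of_lt_of_le hr₁ hx.1)).continuousAt).continuousWithinAt
        · exact continuousOn_const.mul continuousOn_id
      · intro x hx
        rw [interior_Icc] at hx
        have hx0 : 0 < x := lt_trans hr₁ hx.1
        have hD : HasDerivAt (fun y => H y - Hd r₀ * y) (Hd x - Hd r₀) x := by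
          exact ((hHD x hx0).sub ((hasDerivAt_id' x).const_mul (Hd r₀))).congr_deriv (by ring)
        rw [hD.deriv]
        exact sub_neg.2 (hHdMono hx0 hr₀0 hx.2)
    have := hanti ⟨le_refl r₁, hr₁r₀.le⟩ ⟨hr₁r₀.le, le_refl r₀⟩ hr₁r₀
    simp only [] at this
    rw [hc₁def]
    have e : Hd r₀ * (r₁ - r₀) = Hd r₀ * r₁ - Hd r₀ * r₀ := by ring
    linarith
  set C₁ := 2*Ch + Mab*b with hC₁def
  have hC₁nn : 0 ≤ C₁ := by
    rw [hC₁def]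
    have := mul_pos hMabpos hb0
    linarith
  have hdnn : 0 ≤ C₁/c₁ := div_nonneg hC₁nn hc₁pos.le
  refine ⟨K₁ + C₁/c₁ + 1, by linarith, ?_⟩
  intro r hr ρ hρ
  have hr0 : 0 < r := habIoi hr
  rw [hHderiv r hr0]
  rcases le_or_gt ρ r₁ with hsm | hlg
  · -- small densities: ρ ≤ r₁
    have hEρ : c₁ ≤ H ρ - H r - Hd r * (ρ - r) := by
      have hanti : AntitoneOn (fun x => H x - Hd r * x) (Icc 0 r) := by
        apply antitoneOn_of_deriv_nonpos (convex_Icc _ _)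
        · apply ContinuousOn.sub (hHcont.mono (fun x hx => hx.1))
          exact continuousOn_const.mul continuousOn_id
        · intro x hx
          rw [interior_Icc] at hx
          exact ((hHD x hx.1).sub ((hasDerivAt_id x).const_mul (Hd r))).differentiableAt.differentiableWithinAt
        · intro x hx
          rw [interior_Icc] at hx
          have hD : HasDerivAt (fun y => H y - Hd r * y) (Hd x - Hd r) x := by
            exact ((hHD x hx.1).sub ((hasDerivAt_id' x).const_mul (Hd r))).congr_deriv (by ring)
          rw [hD.deriv]
          have := hHdMono.monotoneOn hx.1 hr0 hx.2.le
          linarith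
      have h1 := hanti (⟨hρ, by linarith [hr.1]⟩ : ρ ∈ Icc 0 r)
        (⟨hr₁.le, by linarith [hr.1]⟩ : r₁ ∈ Icc 0 r) hsm
      have h2 : c₁ ≤ H r₁ - H r - Hd r * (r₁ - r) := hr₀min hr
      simp only [] at h1
      have e1 : Hd r * (ρ - r) = Hd r * ρ - Hd r * r := by ring
      have e2 : Hd r * (r₁ - r) = Hd r * r₁ - Hd r * r := by ring
      linarith
    have hL : |h ρ - h r - deriv h r * (ρ - r)| ≤ C₁ := by
      have e1 : |h ρ| ≤ Ch := hCh ρ ⟨hρ, by linarith⟩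
      have e2 : |h r| ≤ Ch := hCh r ⟨hr0.le, by linarith [hr.2]⟩
      have e3 : |deriv h r| ≤ Mab := hMab r hr
      have e4 : |ρ - r| ≤ b := by
        rw [abs_of_nonpos (by linarith [hr.1] : ρ - r ≤ 0)]
        have := hr.2
        linarith
      calc |h ρ - h r - deriv h r * (ρ - r)|
          ≤ |h ρ - h r| + |deriv h r * (ρ - r)| := tri _ _
        _ ≤ (|h ρ| + |h r|) + |deriv h r| * |ρ - r| := by
            rw [abs_mul]
            exact add_le_add (tri _ _) le_rfl
        _ ≤ Ch + Ch + Mab * b := by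
            have := mul_le_mul e3 e4 (abs_nonneg _) hMabpos.le
            linarith
        _ = C₁ := by rw [hC₁def]; ring
    calc |h ρ - h r - deriv h r * (ρ - r)| ≤ C₁ := hL
      _ = (C₁/c₁) * c₁ := by field_simp
      _ ≤ (C₁/c₁) * (H ρ - H r - Hd r * (ρ - r)) := mul_le_mul_of_nonneg_left hEρ hdnn
      _ ≤ (K₁ + C₁/c₁ + 1) * (H ρ - H r - Hd r * (ρ - r)) :=
          mul_le_mul_of_nonneg_right (by linarith) (by linarith)
  · -- ρ > r₁ : monotonicity argument
    have key : ∀ s : ℝ, s = 1 ∨ s = -1 →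
        s * (h ρ - h r - deriv h r * (ρ - r)) ≤ K₁ * (H ρ - H r - Hd r * (ρ - r)) := by
      intro s hs
      have hsabs : ∀ v : ℝ, s * v ≤ |v| := by
        intro v
        rcases hs with rfl | rfl
        · simpa using le_abs_self v
        · rw [neg_one_mul]; exact neg_le_abs v
      set P : ℝ → ℝ := fun t => K₁ * (H t - Hd r * t) - s * (h t - deriv h r * t) with hPdef
      have hPD : ∀ x ∈ Ioi (0:ℝ), HasDerivAt P
          (K₁ * (Hd x - Hd r) - s * (deriv h x - deriv h r)) x := by
        intro x hx
        have d1 : HasDerivAt (fun t => H t - Hd r * t) (Hd x - Hd r) x := by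
          exact ((hHD x hx).sub ((hasDerivAt_id' x).const_mul (Hd r))).congr_deriv (by ring)
        have d2 : HasDerivAt (fun t => h t - deriv h r * t) (deriv h x - deriv h r) x := by
          exact ((hder x hx).sub ((hasDerivAt_id' x).const_mul (deriv h r))).congr_deriv (by ring)
        exact (d1.const_mul K₁).sub (d2.const_mul s)
      have hPcont : ContinuousOn P (Ioi 0) :=
        fun x hx => ((hPD x hx).continuousAt).continuousWithinAt
      have hfinal : P r ≤ P ρ := by
        rcases le_total r ρ with hrρ | hrρ
        · have hmono : MonotoneOn P (Icc r ρ) := by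
            apply monotoneOn_of_deriv_nonneg (convex_Icc _ _)
            · exact hPcont.mono (fun x hx => lt_of_lt_of_le hr0 hx.1)
            · intro x hx
              rw [interior_Icc] at hx
              exact (hPD x (lt_trans hr0 hx.1)).differentiableAt.differentiableWithinAt
            · intro x hx
              rw [interior_Icc] at hx
              have hx0 : 0 < x := lt_trans hr0 hx.1
              rw [(hPD x hx0).deriv]
              have hca := claimA r hr x (by linarith [hr.1, hx.1])
              have habseq : |Hd x - Hd r| = Hd x - Hd r :=
                abs_of_nonneg (sub_nonneg.2 (hHdMono.monotoneOn hr0 hx0 hx.1.le))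
              rw [habseq] at hca
              have hv := hsabs (deriv h x - deriv h r)
              have := le_trans hv hca
              linarith
          exact hmono ⟨le_refl r, hrρ⟩ ⟨hrρ, le_refl ρ⟩ hrρ
        · have hanti : AntitoneOn P (Icc ρ r) := by
            apply antitoneOn_of_deriv_nonpos (convex_Icc _ _)
            · exact hPcont.mono (fun x hx => lt_trans hr₁ (lt_of_lt_of_le hlg hx.1))
            · intro x hx
              rw [interior_Icc] at hx
              have hx0 : 0 < x := lt_trans hr₁ (lt_of_lt_of_le hlg hx.1.le)
              exact (hPD x hx0).differentiableAt.differentiableWithinAt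
            · intro x hx
              rw [interior_Icc] at hx
              have hx0 : 0 < x := lt_trans hr₁ (lt_of_lt_of_le hlg hx.1.le)
              rw [(hPD x hx0).deriv]
              have hca := claimA r hr x (by linarith [hx.1, hlg])
              have habseq : |Hd x - Hd r| = Hd r - Hd x := by
                rw [abs_sub_comm]
                exact abs_of_nonneg (sub_nonneg.2 (hHdMono.monotoneOn hx0 hr0 hx.2.le))
              rw [habseq] at hca
              have hv := hsabs (deriv h r - deriv h x)
              rw [abs_sub_comm] at hv
              have := le_trans hv hca
              linarith
          exact hanti ⟨le_refl ρ, hrρ⟩ ⟨hrρ, le_refl r⟩ hrρ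
      simp only [hPdef] at hfinal
      have eA : s * (h ρ - h r - deriv h r * (ρ - r))
          = s * (h ρ - deriv h r * ρ) - s * (h r - deriv h r * r) := by ring
      have eB : K₁ * (H ρ - H r - Hd r * (ρ - r))
          = K₁ * (H ρ - Hd r * ρ) - K₁ * (H r - Hd r * r) := by ring
      rw [eA, eB]
      linarith
    have k1 := key 1 (Or.inl rfl)
    have k2 := key (-1) (Or.inr rfl)
    rw [one_mul] at k1
    rw [neg_one_mul] at k2
    have habs2 : |h ρ - h r - deriv h r * (ρ - r)| ≤ K₁ * (H ρ - H r - Hd r * (ρ - r)) :=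
      abs_le.2 ⟨by linarith, k1⟩
    have hEnn : 0 ≤ H ρ - H r - Hd r * (ρ - r) := by
      have h0' : 0 ≤ K₁ * (H ρ - H r - Hd r * (ρ - r)) := le_trans (abs_nonneg _) habs2
      exact le_of_not_gt (fun hcon => absurd h0' (not_le.2 (mul_neg_of_pos_of_neg hK₁pos hcon)))
    calc |h ρ - h r - deriv h r * (ρ - r)| ≤ K₁ * (H ρ - H r - Hd r * (ρ - r)) := habs2
      _ ≤ (K₁ + C₁/c₁ + 1) * (H ρ - H r - Hd r * (ρ - r)) :=
          mul_le_mul_of_nonneg_right (by linarith) hEnn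
end

section
/- Fix γ ∈ (1,∞), set γ̂ := min{2, γ}, let h be an admissible monotone pressure for exponent γ with pressure potential H (extended continuously to r = 0), and let 0 < a < b < ∞. Let Ω ⊆ ℝ³ be a measurable set of finite positive Lebesgue measure, let r⁰ : Ω → [a,b] be measurable, and let (ρₙ) be a sequence of nonnegative measurable functions on Ω such that ∫_Ω (H(ρₙ(x)) − H(r⁰(x)) − H′(r⁰(x))·(ρₙ(x) − r⁰(x))) dx → 0 as n → ∞. Then ∫_Ω |ρₙ(x) − r⁰(x)|^γ̂ dx → 0 as n → ∞, i.e. ρₙ → r⁰ strongly in L^γ̂(Ω). -/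
open MeasureTheory

open scoped ENNReal


open intervalIntegral in

private lemma rel_setup {h H : ℝ → ℝ}
    (hcont : ContinuousOn h (Set.Ici (0:ℝ)))
    (hC2 : ContDiffOn ℝ 2 h (Set.Ioi (0:ℝ)))
    (hH : ∀ r ∈ Set.Ioi (0 : ℝ), H r = r * ∫ z in (1 : ℝ)..r, h z / z ^ 2) :
    ∀ r : ℝ, 0 < r →
      HasDerivAt H ((∫ z in (1:ℝ)..r, h z / z ^ 2) + h r / r) r ∧
      HasDerivAt (fun t => (∫ z in (1:ℝ)..t, h z / z ^ 2) + h t / t) (deriv h r / r) r := by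
  have hq : ContinuousOn (fun z : ℝ => h z / z ^ 2) (Set.Ioi 0) := by
    refine ContinuousOn.div (hcont.mono Set.Ioi_subset_Ici_self)
      ((continuous_pow 2).continuousOn) ?_
    intro z hz
    exact pow_ne_zero 2 (ne_of_gt hz)
  have hInt : ∀ r : ℝ, 0 < r → IntervalIntegrable (fun z : ℝ => h z / z ^ 2) volume 1 r := by
    intro r hr
    refine ContinuousOn.intervalIntegrable (hq.mono ?_)
    intro z hz
    simp only [Set.mem_Ioi]
    rcases Set.mem_uIcc.mp hz with ⟨h1, _⟩ | ⟨h1, _⟩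
    · linarith
    · linarith
  have hIder : ∀ r : ℝ, 0 < r →
      HasDerivAt (fun t => ∫ z in (1:ℝ)..t, h z / z ^ 2) (h r / r ^ 2) r := by
    intro r hr
    exact integral_hasDerivAt_right (hInt r hr)
      (hq.stronglyMeasurableAtFilter isOpen_Ioi r hr)
      (hq.continuousAt (Ioi_mem_nhds hr))
  have hhd : ∀ r : ℝ, 0 < r → HasDerivAt h (deriv h r) r := by
    intro r hr
    have hdiff : DifferentiableOn ℝ h (Set.Ioi 0) := hC2.differentiableOn (by norm_num)
    exact ((hdiff r hr).differentiableAt (Ioi_mem_nhds hr)).hasDerivAt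
  intro r hr
  constructor
  · have h1 : HasDerivAt (fun t : ℝ => t * ∫ z in (1:ℝ)..t, h z / z ^ 2)
        (1 * (∫ z in (1:ℝ)..r, h z / z ^ 2) + r * (h r / r ^ 2)) r :=
      (hasDerivAt_id r).mul (hIder r hr)
    have h2 : HasDerivAt H (1 * (∫ z in (1:ℝ)..r, h z / z ^ 2) + r * (h r / r ^ 2)) r := by
      refine h1.congr_of_eventuallyEq ?_
      filter_upwards [Ioi_mem_nhds hr] with t ht
      exact hH t ht
    convert h2 using 1
    field_simp
  · have h3 : HasDerivAt (fun t : ℝ => h t / t)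
        ((deriv h r * r - h r * 1) / r ^ 2) r := (hhd r hr).div (hasDerivAt_id r) (ne_of_gt hr)
    have h4 := (hIder r hr).add h3
    refine h4.congr_deriv ?_
    rw [mul_one, ← add_div, add_sub_cancel, pow_two, mul_div_mul_right _ _ (ne_of_gt hr)]


private lemma rel_core1 {H G : ℝ → ℝ}
    (hG : ∀ r : ℝ, 0 < r → HasDerivAt H (G r) r)
    (hGmono : MonotoneOn G (Set.Ioi (0:ℝ)))
    {r m p : ℝ} (hr : 0 < r) (hm : r ≤ m) (hp : m ≤ p) :
    (G m - G r) * (p - m) ≤ H p - H r - G r * (p - r) := by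
  set φ : ℝ → ℝ := fun s => H s - G r * s with hφdef
  have hφd : ∀ s : ℝ, 0 < s → HasDerivAt φ (G s - G r) s := by
    intro s hs
    have := (hG s hs).sub ((hasDerivAt_id s).const_mul (G r))
    exact this.congr_deriv (by ring)
  have hm0 : 0 < m := lt_of_lt_of_le hr hm
  have key : ∀ x y C : ℝ, 0 < x → x ≤ y →
      (∀ s, x ≤ s → s ≤ y → C ≤ G s - G r) → C * (y - x) ≤ φ y - φ x := by
    intro x y C hx hxy hC
    refine (convex_Icc x y).mul_sub_le_image_sub_of_le_deriv ?_ ?_ ?_ x ?_ y ?_ hxy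
    · intro s hs
      exact (hφd s (lt_of_lt_of_le hx hs.1)).continuousAt.continuousWithinAt
    · intro s hs
      rw [interior_Icc] at hs
      exact ((hφd s (lt_of_lt_of_le hx hs.1.le)).differentiableAt).differentiableWithinAt
    · intro s hs
      rw [interior_Icc] at hs
      rw [(hφd s (lt_of_lt_of_le hx hs.1.le)).deriv]
      exact hC s hs.1.le hs.2.le
    · exact ⟨le_rfl, hxy⟩
    · exact ⟨hxy, le_rfl⟩
  have step1 : 0 * (m - r) ≤ φ m - φ r := by
    refine key r m 0 hr hm ?_
    intro s hs1 hs2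
    have := hGmono (Set.mem_Ioi.mpr hr) (Set.mem_Ioi.mpr (lt_of_lt_of_le hr hs1)) hs1
    linarith
  have step2 : (G m - G r) * (p - m) ≤ φ p - φ m := by
    refine key m p (G m - G r) hm0 hp ?_
    intro s hs1 hs2
    have := hGmono (Set.mem_Ioi.mpr hm0) (Set.mem_Ioi.mpr (lt_of_lt_of_le hm0 hs1)) hs1
    linarith
  have hphi : φ p - φ r = H p - H r - G r * (p - r) := by simp only [hφdef]; ring
  linarith

private lemma rel_core2 {H G : ℝ → ℝ}
    (hG : ∀ r : ℝ, 0 < r → HasDerivAt H (G r) r)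
    (hGmono : MonotoneOn G (Set.Ioi (0:ℝ)))
    {r m p : ℝ} (hp : 0 < p) (hm : p ≤ m) (hr : m ≤ r) :
    (G r - G m) * (m - p) ≤ H p - H r - G r * (p - r) := by
  set φ : ℝ → ℝ := fun s => H s - G r * s with hφdef
  have hφd : ∀ s : ℝ, 0 < s → HasDerivAt φ (G s - G r) s := by
    intro s hs
    have := (hG s hs).sub ((hasDerivAt_id s).const_mul (G r))
    exact this.congr_deriv (by ring)
  have hm0 : 0 < m := lt_of_lt_of_le hp hm
  have key : ∀ x y C : ℝ, 0 < x → x ≤ y →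
      (∀ s, x ≤ s → s ≤ y → G s - G r ≤ C) → φ y - φ x ≤ C * (y - x) := by
    intro x y C hx hxy hC
    refine (convex_Icc x y).image_sub_le_mul_sub_of_deriv_le ?_ ?_ ?_ x ?_ y ?_ hxy
    · intro s hs
      exact (hφd s (lt_of_lt_of_le hx hs.1)).continuousAt.continuousWithinAt
    · intro s hs
      rw [interior_Icc] at hs
      exact ((hφd s (lt_of_lt_of_le hx hs.1.le)).differentiableAt).differentiableWithinAt
    · intro s hs
      rw [interior_Icc] at hs
      rw [(hφd s (lt_of_lt_of_le hx hs.1.le)).deriv]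
      exact hC s hs.1.le hs.2.le
    · exact ⟨le_rfl, hxy⟩
    · exact ⟨hxy, le_rfl⟩
  have hr0 : 0 < r := lt_of_lt_of_le hm0 hr
  have step1 : φ r - φ m ≤ 0 * (r - m) := by
    refine key m r 0 hm0 hr ?_
    intro s hs1 hs2
    have := hGmono (Set.mem_Ioi.mpr (lt_of_lt_of_le hm0 hs1)) (Set.mem_Ioi.mpr hr0) hs2
    linarith
  have step2 : φ m - φ p ≤ (G m - G r) * (m - p) := by
    refine key p m (G m - G r) hp hm ?_
    intro s hs1 hs2
    have := hGmono (Set.mem_Ioi.mpr (lt_of_lt_of_le hp hs1)) (Set.mem_Ioi.mpr hm0) hs2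
    linarith
  have hphi : φ p - φ r = H p - H r - G r * (p - r) := by simp only [hφdef]; ring
  nlinarith [step1, step2]


private lemma rel_holder {α : Type*} [MeasurableSpace α] (μ : Measure α) {f : α → ℝ≥0∞}
    (hf : AEMeasurable f μ) {q : ℝ} (hq0 : 0 < q) (hq1 : q ≤ 1) :
    ∫⁻ x, (f x) ^ q ∂μ ≤ (∫⁻ x, f x ∂μ) ^ q * (μ Set.univ) ^ (1 - q) := by
  rcases eq_or_lt_of_le hq1 with h1 | h1
  · subst h1
    simp
  · have hpq : Real.HolderConjugate (1/q) (1/(1-q)) := by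
      rw [Real.holderConjugate_iff]
      constructor
      · exact one_lt_one_div hq0 h1
      · rw [one_div, one_div, inv_inv, inv_inv]; ring
    have hmeas1 : AEMeasurable (fun x => f x ^ q) μ :=
      (ENNReal.continuous_rpow_const.measurable.comp_aemeasurable hf)
    have key := ENNReal.lintegral_mul_le_Lp_mul_Lq μ hpq hmeas1 (aemeasurable_const (b := (1:ℝ≥0∞)))
    have e1 : ∀ x, (f x ^ q) ^ (1/q) = f x := by
      intro x
      rw [← ENNReal.rpow_mul, mul_one_div_cancel (ne_of_gt hq0), ENNReal.rpow_one]
    simp_rw [Pi.mul_apply, mul_one, e1, ENNReal.one_rpow, one_div_one_div, lintegral_one] at key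
    exact key


set_option maxHeartbeats 3200000 in
/-- Fix `γ ∈ (1,∞)`, set `γ̂ := min 2 γ`, let `h` be an admissible monotone pressure for
exponent `γ` with pressure potential `H` (extended continuously to `r = 0`), and let
`0 < a < b < ∞`. Let `Ω ⊆ ℝ³` be a measurable set of finite positive Lebesgue
measure, let `r⁰ : Ω → [a,b]` be measurable, and let `ρₙ` be a sequence of
nonnegative measurable functions on `Ω` such that
`∫_Ω (H (ρₙ x) − H (r⁰ x) − H′ (r⁰ x) * (ρₙ x − r⁰ x)) dx → 0` as `n → ∞`.
Then `∫_Ω |ρₙ x − r⁰ x| ^ γ̂ dx → 0` as `n → ∞`, i.e. `ρₙ → r⁰` strongly in `L^γ̂(Ω)`.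
(The integrals of the nonnegative integrands are taken as Lebesgue integrals.) -/
theorem strong_convergence_from_relative_entropy
    (γ : ℝ) (hγ : 1 < γ)
    (h : ℝ → ℝ) (hh : AdmissibleMonotonePressure γ h)
    (H : ℝ → ℝ)
    (hH : ∀ r ∈ Set.Ioi (0 : ℝ), H r = r * ∫ z in (1 : ℝ)..r, h z / z ^ 2)
    (hH0 : Filter.Tendsto H (nhdsWithin 0 (Set.Ioi (0 : ℝ))) (nhds (H 0)))
    (a b : ℝ) (ha : 0 < a) (hab : a < b)
    (Ω : Set (Fin 3 → ℝ)) (hΩ : MeasurableSet Ω)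
    (hΩfin : volume Ω < ⊤) (hΩpos : 0 < volume Ω)
    (r₀ : (Fin 3 → ℝ) → ℝ) (hr₀m : Measurable r₀)
    (hr₀ : ∀ x ∈ Ω, r₀ x ∈ Set.Icc a b)
    (ρ : ℕ → (Fin 3 → ℝ) → ℝ) (hρm : ∀ n, Measurable (ρ n))
    (hρ : ∀ n, ∀ x ∈ Ω, 0 ≤ ρ n x)
    (hconv : Filter.Tendsto
      (fun n => ∫⁻ x in Ω,
        ENNReal.ofReal (H (ρ n x) - H (r₀ x) - deriv H (r₀ x) * (ρ n x - r₀ x)))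
      Filter.atTop (nhds 0)) :
    Filter.Tendsto
      (fun n => ∫⁻ x in Ω, ENNReal.ofReal (|ρ n x - r₀ x| ^ min 2 γ))
      Filter.atTop (nhds 0) := by
  
  obtain ⟨hcont, hC2, h00, hdpos, hinf, hinf_pos, hinf_lim⟩ := hh
  set G : ℝ → ℝ := fun t => (∫ z in (1:ℝ)..t, h z / z ^ 2) + h t / t with hGdef
  set W : ℝ → ℝ := fun t => deriv h t / t with hWdef
  have hsetup := rel_setup hcont hC2 hH
  have hHder : ∀ r : ℝ, 0 < r → HasDerivAt H (G r) r := fun r hr => (hsetup r hr).1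
  have hGder : ∀ r : ℝ, 0 < r → HasDerivAt G (W r) r := fun r hr => (hsetup r hr).2
  have hHd : ∀ r : ℝ, 0 < r → deriv H r = G r := fun r hr => (hHder r hr).deriv
  have hWpos : ∀ t : ℝ, 0 < t → 0 < W t := fun t ht =>
    div_pos (hdpos t ht) ht
  have hGcont : ContinuousOn G (Set.Ioi 0) := fun t ht =>
    ((hGder t ht).continuousAt).continuousWithinAt
  have hGmono : MonotoneOn G (Set.Ioi 0) := by
    refine (strictMonoOn_of_deriv_pos (convex_Ioi 0) hGcont ?_).monotoneOn
    intro t ht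
    rw [interior_Ioi] at ht
    rw [(hGder t ht).deriv]
    exact hWpos t ht
  have hWcont : ContinuousOn W (Set.Ioi 0) := by
    refine ContinuousOn.div
      (hC2.continuousOn_deriv_of_isOpen isOpen_Ioi (by norm_num))
      continuousOn_id ?_
    intro t ht
    exact ne_of_gt ht
  have hGgap : ∀ (c x y : ℝ), 0 < x → x ≤ y → (∀ t, x ≤ t → t ≤ y → c ≤ W t) →
      c * (y - x) ≤ G y - G x := by
    intro c x y hx hxy hc
    refine (convex_Icc x y).mul_sub_le_image_sub_of_le_deriv ?_ ?_ ?_ x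
      ⟨le_rfl, hxy⟩ y ⟨hxy, le_rfl⟩ hxy
    · intro s hs
      exact ((hGder s (lt_of_lt_of_le hx hs.1)).continuousAt).continuousWithinAt
    · intro s hs
      rw [interior_Icc] at hs
      exact ((hGder s (lt_of_lt_of_le hx hs.1.le)).differentiableAt).differentiableWithinAt
    · intro s hs
      rw [interior_Icc] at hs
      rw [(hGder s (lt_of_lt_of_le hx hs.1.le)).deriv]
      exact hc s hs.1.le hs.2.le
  -- threshold R from the limit at infinity
  have hev : ∀ᶠ t in Filter.atTop, hinf / 2 ≤ deriv h t / t ^ (γ - 1) :=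
    hinf_lim.eventually (eventually_ge_nhds (by linarith))
  obtain ⟨R₀, hR₀⟩ := Filter.eventually_atTop.mp hev
  set R : ℝ := max R₀ 1 with hRdef
  have hR1 : (1:ℝ) ≤ R := le_max_right _ _
  have hWlow : ∀ t : ℝ, R ≤ t → hinf / 2 * t ^ (γ - 2) ≤ W t := by
    intro t ht
    have ht0 : (0:ℝ) < t := lt_of_lt_of_le (lt_of_lt_of_le zero_lt_one hR1) ht
    have h1 : hinf / 2 ≤ deriv h t / t ^ (γ - 1) := hR₀ t (le_trans (le_max_left _ _) ht)
    have h2 : hinf / 2 * t ^ (γ - 1) ≤ deriv h t :=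
      (le_div_iff₀ (Real.rpow_pos_of_pos ht0 _)).mp h1
    have h3 : hinf / 2 * t ^ (γ - 2) = hinf / 2 * t ^ (γ - 1) / t := by
      rw [show γ - 1 = (γ - 2) + 1 by ring, Real.rpow_add ht0, Real.rpow_one]
      field_simp
    rw [h3]
    exact (div_le_div_iff_of_pos_right ht0).mpr h2
  -- the bounded-region constant
  set K : ℝ := 4 * (R + b) with hKdef
  have hb0 : (0:ℝ) < b := lt_trans ha hab
  have hKb : b < K := by rw [hKdef]; linarith
  have hKpos : (0:ℝ) < K := lt_trans hb0 hKb
  have hbK1 : b + 1 ≤ K := by rw [hKdef]; linarith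
  have hsub : Set.Icc (a/2) K ⊆ Set.Ioi 0 := fun t ht =>
    lt_of_lt_of_le (half_pos ha) ht.1
  obtain ⟨t₀, ht₀, hmin⟩ := isCompact_Icc.exists_isMinOn
    (Set.nonempty_Icc.mpr (by linarith)) (hWcont.mono hsub)
  set c₁ : ℝ := W t₀ with hc₁def
  have hc₁ : 0 < c₁ := hWpos t₀ (hsub ht₀)
  have hminW : ∀ t, t ∈ Set.Icc (a/2) K → c₁ ≤ W t := fun t ht => isMinOn_iff.mp hmin t ht
  -- quadratic lower bound on [0, K]
  have claim1 : ∀ r, a ≤ r → r ≤ b → ∀ p, 0 ≤ p → p ≤ K →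
      c₁/4 * (p - r)^2 ≤ H p - H r - G r * (p - r) := by
    intro r hra hrb
    have hr0 : 0 < r := lt_of_lt_of_le ha hra
    have pos_case : ∀ p, 0 < p → p ≤ K → c₁/4 * (p - r)^2 ≤ H p - H r - G r * (p - r) := by
      intro p hp hpK
      rcases lt_trichotomy p r with hlt | heq | hgt
      · set m : ℝ := (p + r)/2 with hmdef
        have hm1 : p ≤ m := by rw [hmdef]; linarith
        have hm2 : m ≤ r := by rw [hmdef]; linarith
        have hgap : c₁ * (r - m) ≤ G r - G m := by
          refine hGgap c₁ m r (by rw [hmdef]; linarith) hm2 ?_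
          intro t htm htr
          refine hminW t ⟨?_, ?_⟩
          · rw [hmdef] at htm; linarith
          · linarith
        have hcore := rel_core2 hHder hGmono hp hm1 hm2
        have hmul := mul_le_mul_of_nonneg_right hgap (by linarith : (0:ℝ) ≤ m - p)
        have hkey : c₁ * (r - m) * (m - p) = c₁/4 * (p - r)^2 := by
          rw [hmdef]; ring
        calc c₁/4 * (p - r)^2 = c₁ * (r - m) * (m - p) := hkey.symm
        _ ≤ (G r - G m) * (m - p) := hmul
        _ ≤ _ := hcore
      · subst heq
        simp
      · set m : ℝ := (p + r)/2 with hmdef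
        have hm1 : r ≤ m := by rw [hmdef]; linarith
        have hm2 : m ≤ p := by rw [hmdef]; linarith
        have hgap : c₁ * (m - r) ≤ G m - G r := by
          refine hGgap c₁ r m hr0 hm1 ?_
          intro t htm htr
          refine hminW t ⟨?_, ?_⟩
          · linarith
          · rw [hmdef] at htr; linarith
        have hcore := rel_core1 hHder hGmono hr0 hm1 hm2
        have hmul := mul_le_mul_of_nonneg_right hgap (by linarith : (0:ℝ) ≤ p - m)
        have hkey : c₁ * (m - r) * (p - m) = c₁/4 * (p - r)^2 := by
          rw [hmdef]; ring
        calc c₁/4 * (p - r)^2 = c₁ * (m - r) * (p - m) := hkey.symm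
        _ ≤ (G m - G r) * (p - m) := hmul
        _ ≤ _ := hcore
    intro p hp0 hpK
    rcases lt_or_eq_of_le hp0 with hp | hp
    · exact pos_case p hp hpK
    · subst hp
      have hlim : Filter.Tendsto (fun p => H p - H r - G r * (p - r))
          (nhdsWithin 0 (Set.Ioi 0)) (nhds (H 0 - H r - G r * (0 - r))) := by
        have t2 : Filter.Tendsto (fun p : ℝ => H r + G r * (p - r))
            (nhdsWithin 0 (Set.Ioi 0)) (nhds (H r + G r * (0 - r))) :=
          (((continuous_const.add (continuous_const.mul
            ((continuous_id.sub continuous_const)))).tendsto 0).mono_left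
            nhdsWithin_le_nhds)
        simp only [sub_sub]
        exact hH0.sub t2
      have hlim2 : Filter.Tendsto (fun p : ℝ => c₁/4 * (p - r)^2)
          (nhdsWithin 0 (Set.Ioi 0)) (nhds (c₁/4 * ((0:ℝ) - r)^2)) :=
        ((continuous_const.mul ((continuous_id.sub continuous_const).pow 2)).tendsto 0).mono_left
          nhdsWithin_le_nhds
      refine le_of_tendsto_of_tendsto hlim2 hlim ?_
      filter_upwards [Ioo_mem_nhdsGT_of_mem (Set.left_mem_Ico.mpr hKpos)] with p hp
      exact pos_case p hp.1 hp.2.le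
  -- power lower bound for large p
  set c8 : ℝ := hinf/2 * min 1 ((4:ℝ)^(2-γ)) with hc8def
  have hc8 : 0 < c8 := by
    have h4 : (0:ℝ) < (4:ℝ)^(2-γ) := Real.rpow_pos_of_pos (by norm_num) _
    have : (0:ℝ) < min 1 ((4:ℝ)^(2-γ)) := lt_min one_pos h4
    rw [hc8def]
    have : (0:ℝ) < hinf/2 := by linarith
    positivity
  set c₆ : ℝ := c8/8 with hc₆def
  have hc₆ : 0 < c₆ := by rw [hc₆def]; positivity
  have claimB : ∀ r, a ≤ r → r ≤ b → ∀ p, K ≤ p →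
      c₆ * (p - r) ^ γ ≤ H p - H r - G r * (p - r) := by
    intro r hra hrb p hKp
    have hr0 : 0 < r := lt_of_lt_of_le ha hra
    have hRb : (0:ℝ) < R := lt_of_lt_of_le zero_lt_one hR1
    have hp0 : 0 < p := lt_of_lt_of_le hKpos hKp
    have hKeq : K = 4*R + 4*b := by rw [hKdef]; ring
    set m : ℝ := (p + r)/2 with hmdef
    have hm0 : 0 < m := by rw [hmdef]; linarith
    have hRm : R ≤ m/2 := by rw [hmdef]; rw [hKeq] at hKp; linarith
    have hrm2 : r ≤ m/2 := by rw [hmdef]; rw [hKeq] at hKp; linarith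
    have hm2m : m/2 ≤ m := by linarith
    have hmp : m ≤ p := by rw [hmdef]; linarith [lt_trans hKb (lt_of_le_of_lt hKp (lt_add_one p))]
    have hmp' : m ≤ p := by rw [hmdef]; linarith [lt_of_le_of_lt hrb hKb, hKp]
    have hWm : ∀ t, m/2 ≤ t → t ≤ m → c8 * p ^ (γ-2) ≤ W t := by
      intro t h1 h2
      have ht0 : (0:ℝ) < t := lt_of_lt_of_le (by linarith : (0:ℝ) < m/2) h1
      have hWt := hWlow t (le_trans hRm h1)
      have hp4 : (0:ℝ) < p/4 := by positivity
      have hp4t : p/4 ≤ t := by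
        rw [hmdef] at h1; linarith
      have htp : t ≤ p := le_trans h2 hmp'
      have hkey : min 1 ((4:ℝ)^(2-γ)) * p ^ (γ - 2) ≤ t ^ (γ - 2) := by
        rcases le_total γ 2 with hγ2 | hγ2
        · have h3 : p ^ (γ-2) ≤ t ^ (γ-2) :=
            Real.rpow_le_rpow_of_nonpos ht0 htp (by linarith)
          have h4 : min 1 ((4:ℝ)^(2-γ)) ≤ 1 := min_le_left _ _
          have h5 : (0:ℝ) ≤ p ^ (γ-2) := Real.rpow_nonneg (le_of_lt hp0) _
          nlinarith
        · have h3 : (p/4) ^ (γ-2) ≤ t ^ (γ-2) :=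
            Real.rpow_le_rpow (le_of_lt hp4) hp4t (by linarith)
          have h5 : (p/4:ℝ) ^ (γ-2) = (4:ℝ)^(2-γ) * p ^ (γ-2) := by
            rw [Real.div_rpow (le_of_lt hp0) (by norm_num : (0:ℝ) ≤ 4)]
            rw [show (2-γ) = -(γ-2) by ring, Real.rpow_neg (by norm_num : (0:ℝ) ≤ 4)]
            field_simp
          have h4 : min 1 ((4:ℝ)^(2-γ)) ≤ (4:ℝ)^(2-γ) := min_le_right _ _
          have h6 : (0:ℝ) ≤ p ^ (γ-2) := Real.rpow_nonneg (le_of_lt hp0) _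
          nlinarith
      calc c8 * p^(γ-2) = (hinf/2) * (min 1 ((4:ℝ)^(2-γ)) * p^(γ-2)) := by
            rw [hc8def]; ring
      _ ≤ (hinf/2) * t^(γ-2) :=
            mul_le_mul_of_nonneg_left hkey (by linarith)
      _ ≤ W t := hWt
    have hgap2 : c8 * p^(γ-2) * (m - m/2) ≤ G m - G (m/2) :=
      hGgap _ _ _ (by linarith) hm2m hWm
    have hGrm : G r ≤ G (m/2) := hGmono (Set.mem_Ioi.mpr hr0)
      (Set.mem_Ioi.mpr (by linarith)) hrm2
    have hcore := rel_core1 hHder hGmono hr0 (le_trans hrm2 hm2m) hmp'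
    have hmm : m - m/2 = m/2 := by ring
    rw [hmm] at hgap2
    have hGmr : c8 * p^(γ-2) * (m/2) ≤ G m - G r := by linarith
    have hpm0 : (0:ℝ) ≤ p - m := by linarith
    have hpr0 : (0:ℝ) < p - r := by linarith [lt_of_le_of_lt hrb hKb]
    have h6 : p/4 ≤ m/2 := by rw [hmdef]; linarith
    have h7 : p - m = (p - r)/2 := by rw [hmdef]; ring
    have hA : (0:ℝ) ≤ c8 * p^(γ-2) :=
      mul_nonneg (le_of_lt hc8) (Real.rpow_nonneg (le_of_lt hp0) _)
    have e1 : p ^ (γ - 2) * p = p ^ (γ - 1) := by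
      rw [show γ - 1 = (γ - 2) + 1 by ring, Real.rpow_add_one (ne_of_gt hp0)]
    have e2 : (p - r) ^ (γ - 1) ≤ p ^ (γ - 1) :=
      Real.rpow_le_rpow (le_of_lt hpr0) (by linarith) (by linarith)
    have e3 : (p - r) ^ (γ - 1) * (p - r) = (p - r) ^ γ := by
      rw [← Real.rpow_add_one (ne_of_gt hpr0)]
      congr 1
      ring
    calc c₆ * (p - r) ^ γ = c8/8 * ((p-r)^(γ-1) * (p-r)) := by rw [hc₆def, e3]
    _ ≤ c8/8 * (p^(γ-1) * (p-r)) := by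
        apply mul_le_mul_of_nonneg_left
          (mul_le_mul_of_nonneg_right e2 (le_of_lt hpr0)) (by linarith)
    _ = c8 * p^(γ-2) * (p/4) * ((p-r)/2) := by rw [← e1]; ring
    _ ≤ c8 * p^(γ-2) * (m/2) * ((p-r)/2) := by
        apply mul_le_mul_of_nonneg_right
          (mul_le_mul_of_nonneg_left h6 hA) (by linarith)
    _ = c8 * p^(γ-2) * (m/2) * (p - m) := by rw [h7]
    _ ≤ (G m - G r) * (p - m) := mul_le_mul_of_nonneg_right hGmr hpm0
    _ ≤ _ := hcore
  -- nonnegativity of the relative entropy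
  have hEnn : ∀ r, a ≤ r → r ≤ b → ∀ p, 0 ≤ p →
      0 ≤ H p - H r - G r * (p - r) := by
    intro r hra hrb p hp0
    rcases le_total p K with hpK | hpK
    · exact le_trans (by positivity) (claim1 r hra hrb p hp0 hpK)
    · refine le_trans ?_ (claimB r hra hrb p hpK)
      have : (0:ℝ) ≤ (p - r) ^ γ := Real.rpow_nonneg (by linarith [lt_of_le_of_lt hrb hKb]) _
      positivity
  -- global constant C
  set K2 : ℝ := max 1 (K ^ (γ-2)) with hK2def
  have hK20 : (0:ℝ) < K2 := lt_of_lt_of_le one_pos (le_max_left _ _)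
  set C : ℝ := 4/c₁ * K2 + 1/c₆ + 4/c₁ with hCdef
  have h4c1 : (0:ℝ) < 4/c₁ := div_pos (by norm_num) hc₁
  have h1c6 : (0:ℝ) < 1/c₆ := div_pos one_pos hc₆
  have hC : 0 < C := by rw [hCdef]; nlinarith [mul_pos h4c1 hK20]
  have hC1le : 4/c₁ ≤ C := by rw [hCdef]; nlinarith [mul_pos h4c1 hK20]
  have hC2le : 4/c₁ * K2 ≤ C := by rw [hCdef]; linarith
  have hC3le : 1/c₆ ≤ C := by rw [hCdef]; nlinarith [mul_pos h4c1 hK20]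
  -- the two pointwise real bounds
  have boundsq : ∀ r, a ≤ r → r ≤ b → ∀ p, 0 ≤ p → |p - r| ≤ 1 →
      |p - r| ^ (2:ℝ) ≤ C * (H p - H r - G r * (p - r)) := by
    intro r hra hrb p hp0 hd1
    have hpK : p ≤ K := by
      rcases abs_le.mp hd1 with ⟨h1, h2⟩
      linarith
    have hcl := claim1 r hra hrb p hp0 hpK
    have habs : |p - r| ^ (2:ℝ) = (p - r)^2 := by
      rw [show (2:ℝ) = ((2:ℕ):ℝ) by norm_num, Real.rpow_natCast, sq_abs]
    rw [habs, show (p - r)^2 = (4/c₁) * (c₁/4 * (p - r)^2) by field_simp]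
    exact mul_le_mul hC1le hcl (by positivity) (le_of_lt hC)
  have boundpow : ∀ r, a ≤ r → r ≤ b → ∀ p, 0 ≤ p → 1 < |p - r| →
      |p - r| ^ γ ≤ C * (H p - H r - G r * (p - r)) := by
    intro r hra hrb p hp0 hd1
    have habs0 : (0:ℝ) < |p - r| := lt_trans one_pos hd1
    have hrK : r ≤ K := le_of_lt (lt_of_le_of_lt hrb hKb)
    rcases le_total p K with hpK | hpK
    · have hdK : |p - r| ≤ K := by
        rw [abs_le]
        exact ⟨by linarith, by linarith⟩
      have hsplit : |p - r| ^ γ = |p - r| ^ (γ - 2) * |p - r| ^ (2:ℝ) := by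
        rw [← Real.rpow_add habs0]
        congr 1
        ring
      have hfac : |p - r| ^ (γ-2) ≤ K2 := by
        rcases le_total γ 2 with hγ2 | hγ2
        · exact le_trans (Real.rpow_le_one_of_one_le_of_nonpos (le_of_lt hd1)
            (by linarith)) (le_max_left _ _)
        · exact le_trans (Real.rpow_le_rpow (abs_nonneg _) hdK (by linarith))
            (le_max_right _ _)
      have hsq : |p - r| ^ (2:ℝ) = (p - r)^2 := by
        rw [show (2:ℝ) = ((2:ℕ):ℝ) by norm_num, Real.rpow_natCast, sq_abs]
      have hcl := claim1 r hra hrb p hp0 hpK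
      calc |p - r| ^ γ = |p-r|^(γ-2) * |p-r|^(2:ℝ) := hsplit
      _ ≤ K2 * (p - r)^2 := by
          rw [hsq]
          exact mul_le_mul_of_nonneg_right hfac (sq_nonneg _)
      _ = (4/c₁ * K2) * (c₁/4 * (p-r)^2) := by field_simp
      _ ≤ C * (H p - H r - G r * (p - r)) :=
          mul_le_mul hC2le hcl (by positivity) (le_of_lt hC)
    · have hprpos : (0:ℝ) < p - r := by linarith
      have hd : |p - r| = p - r := abs_of_pos hprpos
      have hcl := claimB r hra hrb p hpK
      rw [hd]
      have h0 : (0:ℝ) ≤ c₆ * (p - r)^γ :=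
        mul_nonneg (le_of_lt hc₆) (Real.rpow_nonneg (le_of_lt hprpos) _)
      calc (p - r) ^ γ = (1/c₆) * (c₆ * (p - r)^γ) := by field_simp
      _ ≤ C * (H p - H r - G r * (p - r)) := mul_le_mul hC3le hcl h0 (le_of_lt hC)
  -- measurable modifications
  have hHcont : ContinuousOn H (Set.Ici 0) := by
    intro t ht
    rcases eq_or_lt_of_le (Set.mem_Ici.mp ht) with h0t | h0t
    · have hins : Set.Ici (0:ℝ) = insert 0 (Set.Ioi 0) := (Set.Ioi_insert).symm
      unfold ContinuousWithinAt
      rw [← h0t, hins, nhdsWithin_insert]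
      exact Filter.Tendsto.sup (tendsto_pure_nhds H 0) hH0
    · exact ((hHder t h0t).continuousAt).continuousWithinAt
  set Ht : ℝ → ℝ := fun x => H (max x 0) with hHtdef
  have hHtc : Continuous Ht :=
    hHcont.comp_continuous (continuous_id.max continuous_const) (fun x => le_max_right x 0)
  set Gt : ℝ → ℝ := fun x => G (max x a) with hGtdef
  have hGtc : Continuous Gt :=
    hGcont.comp_continuous (continuous_id.max continuous_const)
      (fun x => lt_of_lt_of_le ha (le_max_right x a))
  set Et : ℕ → (Fin 3 → ℝ) → ℝ :=
    fun n x => Ht (ρ n x) - Ht (r₀ x) - Gt (r₀ x) * (ρ n x - r₀ x) with hEtdef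
  have hEtm : ∀ n, Measurable (Et n) := by
    intro n
    exact ((hHtc.measurable.comp (hρm n)).sub (hHtc.measurable.comp hr₀m)).sub
      ((hGtc.measurable.comp hr₀m).mul ((hρm n).sub hr₀m))
  have hEteq' : ∀ n, ∀ x ∈ Ω, Et n x =
      H (ρ n x) - H (r₀ x) - G (r₀ x) * (ρ n x - r₀ x) := by
    intro n x hx
    obtain ⟨hr1, hr2⟩ := hr₀ x hx
    have hr0x : 0 < r₀ x := lt_of_lt_of_le ha hr1
    have e1 : max (ρ n x) 0 = ρ n x := max_eq_left (hρ n x hx)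
    have e2 : max (r₀ x) a = r₀ x := max_eq_left hr1
    have e3 : max (r₀ x) 0 = r₀ x := max_eq_left (le_of_lt hr0x)
    show H (max (ρ n x) 0) - H (max (r₀ x) 0) - G (max (r₀ x) a) * (ρ n x - r₀ x) = _
    rw [e1, e2, e3]
  have hEteq : ∀ n, ∀ x ∈ Ω, Et n x =
      H (ρ n x) - H (r₀ x) - deriv H (r₀ x) * (ρ n x - r₀ x) := by
    intro n x hx
    have hr0x : 0 < r₀ x := lt_of_lt_of_le ha (hr₀ x hx).1
    rw [hEteq' n x hx, hHd (r₀ x) hr0x]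
  have hconv' : Filter.Tendsto (fun n => ∫⁻ x in Ω, ENNReal.ofReal (Et n x))
      Filter.atTop (nhds 0) := by
    have heq : (fun n => ∫⁻ x in Ω, ENNReal.ofReal (Et n x)) =
        (fun n => ∫⁻ x in Ω,
          ENNReal.ofReal (H (ρ n x) - H (r₀ x) - deriv H (r₀ x) * (ρ n x - r₀ x))) := by
      funext n
      apply setLIntegral_congr_fun hΩ
      exact (fun x hx => by rw [hEteq n x hx])
    rw [heq]
    exact hconv
  -- the exponent
  set q : ℝ := min 2 γ / 2 with hqdef
  have hmin0 : (0:ℝ) < min 2 γ := lt_min two_pos (by linarith)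
  have hq0 : 0 < q := by rw [hqdef]; linarith
  have hq1 : q ≤ 1 := by rw [hqdef]; have := min_le_left 2 γ; linarith
  have h2q : 2 * q = min 2 γ := by rw [hqdef]; ring
  -- pointwise ENNReal bound
  have hpt : ∀ n x, x ∈ Ω → ENNReal.ofReal (|ρ n x - r₀ x| ^ min 2 γ) ≤
      ENNReal.ofReal (C * Et n x) + (ENNReal.ofReal (C * Et n x)) ^ q := by
    intro n x hx
    obtain ⟨hr1, hr2⟩ := hr₀ x hx
    have hp0 := hρ n x hx
    have hEx := hEteq' n x hx
    have hE0 : 0 ≤ Et n x := by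
      rw [hEx]
      exact hEnn (r₀ x) hr1 hr2 (ρ n x) hp0
    have hCE0 : 0 ≤ C * Et n x := mul_nonneg (le_of_lt hC) hE0
    rcases le_or_gt |ρ n x - r₀ x| 1 with hle | hgt
    · have h1 : |ρ n x - r₀ x| ^ min 2 γ = (|ρ n x - r₀ x| ^ (2:ℝ)) ^ q := by
        rw [← Real.rpow_mul (abs_nonneg _), h2q]
      have h2 : |ρ n x - r₀ x| ^ (2:ℝ) ≤ C * Et n x := by
        rw [hEx]
        exact boundsq (r₀ x) hr1 hr2 (ρ n x) hp0 hle
      have h3 : |ρ n x - r₀ x| ^ min 2 γ ≤ (C * Et n x) ^ q := by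
        rw [h1]
        exact Real.rpow_le_rpow (Real.rpow_nonneg (abs_nonneg _) _) h2 (le_of_lt hq0)
      refine le_trans (ENNReal.ofReal_le_ofReal h3) ?_
      rw [ENNReal.ofReal_rpow_of_nonneg hCE0 (le_of_lt hq0)]
      exact self_le_add_left _ _
    · have h1 : |ρ n x - r₀ x| ^ min 2 γ ≤ |ρ n x - r₀ x| ^ γ :=
        Real.rpow_le_rpow_of_exponent_le (le_of_lt hgt) (min_le_right 2 γ)
      have h2 : |ρ n x - r₀ x| ^ γ ≤ C * Et n x := by
        rw [hEx]
        exact boundpow (r₀ x) hr1 hr2 (ρ n x) hp0 hgt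
      refine le_trans (ENNReal.ofReal_le_ofReal (le_trans h1 h2)) ?_
      exact self_le_add_right _ _
  -- integral bound
  set A : ℕ → ℝ≥0∞ := fun n => ∫⁻ x in Ω, ENNReal.ofReal (Et n x) with hAdef
  set CC : ℝ≥0∞ := ENNReal.ofReal C with hCCdef
  have hCCne : CC ≠ ⊤ := ENNReal.ofReal_ne_top
  have hFnm : ∀ n, Measurable (fun x => ENNReal.ofReal (C * Et n x)) := fun n =>
    ENNReal.measurable_ofReal.comp (measurable_const.mul (hEtm n))
  have hTbound : ∀ n, (∫⁻ x in Ω, ENNReal.ofReal (|ρ n x - r₀ x| ^ min 2 γ)) ≤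
      CC * A n + (CC * A n) ^ q * (volume Ω) ^ (1 - q) := by
    intro n
    have step3 : (∫⁻ x in Ω, ENNReal.ofReal (C * Et n x)) = CC * A n := by
      simp_rw [ENNReal.ofReal_mul (le_of_lt hC)]
      exact lintegral_const_mul CC (ENNReal.measurable_ofReal.comp (hEtm n))
    have step1 : (∫⁻ x in Ω, ENNReal.ofReal (|ρ n x - r₀ x| ^ min 2 γ)) ≤
        ∫⁻ x in Ω, (ENNReal.ofReal (C * Et n x) + (ENNReal.ofReal (C * Et n x)) ^ q) :=
      lintegral_mono_ae ((ae_restrict_iff' hΩ).mpr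
        (Filter.Eventually.of_forall (fun x hx => hpt n x hx)))
    have step2 : (∫⁻ x in Ω, (ENNReal.ofReal (C * Et n x) +
        (ENNReal.ofReal (C * Et n x)) ^ q)) =
        (∫⁻ x in Ω, ENNReal.ofReal (C * Et n x)) +
          ∫⁻ x in Ω, (ENNReal.ofReal (C * Et n x)) ^ q :=
      lintegral_add_left (hFnm n) _
    have step4 : (∫⁻ x in Ω, (ENNReal.ofReal (C * Et n x)) ^ q) ≤
        (CC * A n) ^ q * (volume Ω) ^ (1-q) := by
      have hh := rel_holder (volume.restrict Ω) (hFnm n).aemeasurable hq0 hq1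
      rw [Measure.restrict_apply_univ, step3] at hh
      exact hh
    calc (∫⁻ x in Ω, ENNReal.ofReal (|ρ n x - r₀ x| ^ min 2 γ))
        ≤ ∫⁻ x in Ω, (ENNReal.ofReal (C * Et n x) + (ENNReal.ofReal (C * Et n x)) ^ q) := step1
    _ = (∫⁻ x in Ω, ENNReal.ofReal (C * Et n x)) +
          ∫⁻ x in Ω, (ENNReal.ofReal (C * Et n x)) ^ q := step2
    _ ≤ CC * A n + (CC * A n) ^ q * (volume Ω) ^ (1-q) := by
        rw [step3]
        exact add_le_add le_rfl step4
  -- pass to the limit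
  have h1t : Filter.Tendsto (fun n => CC * A n) Filter.atTop (nhds 0) := by
    have hmul := ENNReal.Tendsto.const_mul (a := CC) hconv' (Or.inr hCCne)
    simpa using hmul
  have h2t : Filter.Tendsto (fun n => (CC * A n) ^ q * (volume Ω) ^ (1-q))
      Filter.atTop (nhds 0) := by
    have hvne : (volume Ω) ^ (1-q) ≠ ⊤ :=
      ENNReal.rpow_ne_top_of_nonneg (by linarith) hΩfin.ne
    have h2a : Filter.Tendsto (fun n => (CC * A n) ^ q) Filter.atTop (nhds 0) := by
      have := Filter.Tendsto.ennrpow_const q h1t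
      rwa [ENNReal.zero_rpow_of_pos hq0] at this
    have := ENNReal.Tendsto.mul_const h2a (Or.inr hvne)
    simpa using this
  refine tendsto_of_tendsto_of_tendsto_of_le_of_le tendsto_const_nhds ?_
    (fun n => zero_le) hTbound
  have := h1t.add h2t
  simpa using this
end

section
/- Fix γ ∈ (1,∞), set γ̂ := min{2, γ}, let h be an admissible monotone pressure for exponent γ with pressure potential H (extended continuously to r = 0), and let 0 < a < b < ∞. Let Ω ⊆ ℝ³ be a measurable set of finite positive Lebesgue measure. Then there exists a constant C > 0, depending only on a, b, γ, h and the measure of Ω, such that for every measurable r : Ω → [a,b] and every nonnegative measurable ρ : Ω → [0,∞) with D := ∫_Ω (H(ρ(x)) − H(r(x)) − H′(r(x))·(ρ(x) − r(x))) dx ≤ 1, the averaged difference satisfies ( (1/|Ω|) ∫_Ω (ρ(x) − r(x)) dx )² ≤ C · D. -/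
open MeasureTheory

open Set Filter

namespace MDCRE

lemma contOn_integrand {h : ℝ → ℝ} (hc : ContinuousOn h (Ici 0)) :
    ContinuousOn (fun z : ℝ => h z / z ^ 2) (Ioi 0) :=
  (hc.mono Ioi_subset_Ici_self).div ((continuous_pow 2).continuousOn)
    (fun z hz => pow_ne_zero 2 (ne_of_gt hz))

lemma uIcc_subset_Ioi {s : ℝ} (hs : 0 < s) : uIcc (1:ℝ) s ⊆ Ioi 0 := fun z hz =>
  lt_of_lt_of_le (lt_min one_pos hs) hz.1

lemma hasDerivAt_I {h : ℝ → ℝ} (hc : ContinuousOn h (Ici 0)) {s : ℝ} (hs : 0 < s) :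
    HasDerivAt (fun r => ∫ z in (1:ℝ)..r, h z / z ^ 2) (h s / s ^ 2) s := by
  apply intervalIntegral.integral_hasDerivAt_right
  · exact ((contOn_integrand hc).mono (uIcc_subset_Ioi hs)).intervalIntegrable
  · exact (contOn_integrand hc).stronglyMeasurableAtFilter isOpen_Ioi s hs
  · exact (contOn_integrand hc).continuousAt (isOpen_Ioi.mem_nhds hs)

lemma hasDerivAt_H {h H : ℝ → ℝ} (hc : ContinuousOn h (Ici 0))
    (hH : ∀ r ∈ Set.Ioi (0 : ℝ), H r = r * ∫ z in (1 : ℝ)..r, h z / z ^ 2)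
    {s : ℝ} (hs : 0 < s) :
    HasDerivAt H ((∫ z in (1:ℝ)..s, h z / z ^ 2) + h s / s) s := by
  have h1 : HasDerivAt (fun r => r * ∫ z in (1:ℝ)..r, h z / z ^ 2)
      (1 * (∫ z in (1:ℝ)..s, h z / z ^ 2) + s * (h s / s ^ 2)) s :=
    (hasDerivAt_id s).mul (hasDerivAt_I hc hs)
  have heq : H =ᶠ[nhds s] fun r => r * ∫ z in (1:ℝ)..r, h z / z ^ 2 := by
    filter_upwards [isOpen_Ioi.mem_nhds hs] with r hr using hH r hr
  have := h1.congr_of_eventuallyEq heq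
  refine this.congr_deriv ?_
  field_simp

lemma hasDerivAt_H₁ {h : ℝ → ℝ} (hc : ContinuousOn h (Ici 0))
    (hd2 : ContDiffOn ℝ 2 h (Set.Ioi (0:ℝ))) {s : ℝ} (hs : 0 < s) :
    HasDerivAt (fun r => (∫ z in (1:ℝ)..r, h z / z ^ 2) + h r / r) (deriv h s / s) s := by
  have hdh : HasDerivAt h (deriv h s) s :=
    ((hd2.differentiableOn (by norm_num)).differentiableAt (isOpen_Ioi.mem_nhds hs)).hasDerivAt
  have h2 : HasDerivAt (fun r => h r / r) ((deriv h s * s - h s * 1) / s ^ 2) s :=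
    hdh.div (hasDerivAt_id s) (ne_of_gt hs)
  have := (hasDerivAt_I hc hs).add h2
  refine this.congr_deriv ?_
  field_simp
  ring

lemma entropy_pointwise {h H : ℝ → ℝ} (hc : ContinuousOn h (Ici 0))
    (hd2 : ContDiffOn ℝ 2 h (Set.Ioi (0:ℝ)))
    (hpos : ∀ r ∈ Set.Ioi (0:ℝ), 0 < deriv h r)
    (hH : ∀ r ∈ Set.Ioi (0 : ℝ), H r = r * ∫ z in (1 : ℝ)..r, h z / z ^ 2)
    (hH0 : Filter.Tendsto H (nhdsWithin 0 (Set.Ioi (0 : ℝ))) (nhds (H 0)))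
    {a b : ℝ} (ha : 0 < a) (hab : a < b) :
    ∃ c : ℝ, 0 < c ∧ ∀ t ∈ Icc a b, ∀ s : ℝ, 0 ≤ s →
      c * min ((s - t)^2) |s - t| ≤
        H s - H t - ((∫ z in (1:ℝ)..t, h z / z ^ 2) + h t / t) * (s - t) := by
  set H₁ : ℝ → ℝ := fun r => (∫ z in (1:ℝ)..r, h z / z ^ 2) + h r / r with hH₁def
  have hb : (0:ℝ) < b := ha.trans hab
  have hH1d : ∀ s ∈ Ioi (0:ℝ), HasDerivAt H₁ (deriv h s / s) s := fun s hs =>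
    hasDerivAt_H₁ hc hd2 hs
  have hHd : ∀ s ∈ Ioi (0:ℝ), HasDerivAt H (H₁ s) s := fun s hs => hasDerivAt_H hc hH hs
  have hH1cont : ContinuousOn H₁ (Ioi 0) := fun s hs =>
    (hH1d s hs).continuousAt.continuousWithinAt
  have hHcont : ContinuousOn H (Ici 0) := by
    intro x hx
    rcases eq_or_lt_of_le (Set.mem_Ici.mp hx) with hx0 | hx0
    · subst hx0
      exact continuousWithinAt_Ioi_iff_Ici.mp hH0
    · exact (hHd x hx0).continuousAt.continuousWithinAt
  have hmono : StrictMonoOn H₁ (Ioi 0) := by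
    apply strictMonoOn_of_deriv_pos (convex_Ioi 0) hH1cont
    intro x hx
    rw [interior_Ioi] at hx
    rw [(hH1d x hx).deriv]
    exact div_pos (hpos x hx) hx
  clear_value H₁
  -- the minimum of H'' on [a/2, 2b]
  have hsub : Icc (a/2) (2*b) ⊆ Ioi (0:ℝ) := fun z hz => lt_of_lt_of_le (by linarith) hz.1
  have hφc : ContinuousOn (fun z => deriv h z / z) (Icc (a/2) (2*b)) :=
    ((hd2.continuousOn_deriv_of_isOpen isOpen_Ioi (by norm_num)).mono hsub).div
      continuousOn_id (fun z hz => ne_of_gt (hsub hz))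
  obtain ⟨z₀, hz₀mem, hz₀min⟩ := isCompact_Icc.exists_isMinOn
    (nonempty_Icc.mpr (by linarith)) hφc
  set c₂ : ℝ := deriv h z₀ / z₀ with hc₂def
  have hc₂pos : 0 < c₂ := div_pos (hpos z₀ (hsub hz₀mem)) (hsub hz₀mem)
  -- ψ monotone on [a/2, 2b]
  have hψmono : MonotoneOn (fun s => H₁ s - c₂ * s) (Icc (a/2) (2*b)) := by
    have hd : ∀ x ∈ Ioo (a/2) (2*b), HasDerivAt (fun s => H₁ s - c₂ * s)
        (deriv h x / x - c₂) x := fun x hx =>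
      by have := (hH1d x (hsub (Ioo_subset_Icc_self hx))).sub ((hasDerivAt_id' x).const_mul c₂); rwa [mul_one] at this
    apply monotoneOn_of_deriv_nonneg (convex_Icc _ _) ?_ ?_ ?_
    · exact (hH1cont.mono hsub).sub ((continuous_const.mul continuous_id).continuousOn)
    · rw [interior_Icc]
      exact fun x hx => ((hd x hx).differentiableAt).differentiableWithinAt
    · rw [interior_Icc]
      intro x hx
      rw [(hd x hx).deriv]
      have := hz₀min (Ioo_subset_Icc_self hx)
      simpa [sub_nonneg] using this
  clear_value c₂
  -- K1 : quadratic lower bound on [a/2, 2b]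
  have K1 : ∀ t ∈ Icc a b, ∀ s ∈ Icc (a/2) (2*b),
      c₂/2 * (s - t)^2 ≤ H s - H t - H₁ t * (s - t) := by
    intro t ht s hs
    have htmem : t ∈ Icc (a/2) (2*b) := ⟨by linarith [ht.1], by linarith [ht.2]⟩
    have ht0 : (0:ℝ) < t := lt_of_lt_of_le ha ht.1
    set F : ℝ → ℝ := fun s => H s - H₁ t * s - c₂/2 * (s - t)^2 with hFdef
    have hFd : ∀ x ∈ Ioi (0:ℝ), HasDerivAt F (H₁ x - H₁ t - c₂ * (x - t)) x := by
      intro x hx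
      have h1 : HasDerivAt (fun s : ℝ => c₂/2 * (s - t)^2) (c₂/2 * (2 * (x - t))) x := by
        have : HasDerivAt (fun s : ℝ => (s - t)^2) (2 * (x - t)^1 * 1) x :=
          ((hasDerivAt_id x).sub_const t).pow 2
        simpa using this.const_mul (c₂/2)
      have h2 : HasDerivAt (fun s : ℝ => H₁ t * s) (H₁ t) x := by
        simpa using (hasDerivAt_id x).const_mul (H₁ t)
      have := ((hHd x hx).sub h2).sub h1
      refine this.congr_deriv ?_
      ring
    have hFcont : ContinuousOn F (Icc (a/2) (2*b)) := by
      apply ContinuousOn.sub ?_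
        ((continuous_const.mul ((continuous_id.sub continuous_const).pow 2)).continuousOn)
      exact (hHcont.mono (hsub.trans Ioi_subset_Ici_self)).sub
          ((continuous_const.mul continuous_id).continuousOn)
    have key : ∀ u ∈ Icc (a/2) (2*b), F t ≤ F u := by
      intro u hu
      rcases le_total u t with hut | htu
      · have hanti : AntitoneOn F (Icc (a/2) t) := by
          apply antitoneOn_of_deriv_nonpos (convex_Icc _ _) ?_ ?_ ?_
          · exact hFcont.mono (Icc_subset_Icc le_rfl htmem.2)
          · rw [interior_Icc]
            intro x hx
            exact ((hFd x (lt_of_lt_of_le (by linarith) (le_of_lt hx.1))).differentiableAt).differentiableWithinAt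
          · rw [interior_Icc]
            intro x hx
            have hx0 : (0:ℝ) < x := lt_of_lt_of_le (by linarith) (le_of_lt hx.1)
            rw [(hFd x hx0).deriv]
            have hxmem : x ∈ Icc (a/2) (2*b) := ⟨le_of_lt hx.1, by linarith [hx.2, htmem.2]⟩
            have := hψmono hxmem htmem (le_of_lt hx.2)
            simp only at this
            nlinarith [hx.2]
        exact hanti ⟨hu.1, hut⟩ ⟨le_of_lt (by linarith [ht.1] : a/2 < t), le_rfl⟩ hut
      · have hmonoF : MonotoneOn F (Icc t (2*b)) := by
          apply monotoneOn_of_deriv_nonneg (convex_Icc _ _) ?_ ?_ ?_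
          · exact hFcont.mono (Icc_subset_Icc htmem.1 le_rfl)
          · rw [interior_Icc]
            intro x hx
            exact ((hFd x (ht0.trans hx.1)).differentiableAt).differentiableWithinAt
          · rw [interior_Icc]
            intro x hx
            rw [(hFd x (ht0.trans hx.1)).deriv]
            have hxmem : x ∈ Icc (a/2) (2*b) := ⟨by linarith [htmem.1, hx.1], le_of_lt hx.2⟩
            have := hψmono htmem hxmem (le_of_lt hx.1)
            simp only at this
            nlinarith [hx.1]
        exact hmonoF ⟨le_rfl, htmem.2⟩ ⟨htu, hu.2⟩ htu
    have := key s hs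
    simp only [hFdef] at this
    nlinarith [this]
  -- positive minimum on [a,b] × [0, a/2]
  set E : ℝ × ℝ → ℝ := fun p => H p.2 - H p.1 - H₁ p.1 * (p.2 - p.1) with hEdef
  have hKcomp : IsCompact (Icc a b ×ˢ Icc (0:ℝ) (a/2)) := isCompact_Icc.prod isCompact_Icc
  have hKne : (Icc a b ×ˢ Icc (0:ℝ) (a/2)).Nonempty :=
    ⟨(a, 0), ⟨⟨le_rfl, le_of_lt hab⟩, ⟨le_rfl, by linarith⟩⟩⟩
  have hEcont : ContinuousOn E (Icc a b ×ˢ Icc (0:ℝ) (a/2)) := by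
    have h1 : ContinuousOn (fun p : ℝ × ℝ => H p.2) (Icc a b ×ˢ Icc (0:ℝ) (a/2)) :=
      hHcont.comp continuous_snd.continuousOn
        (fun p hp => (hp.2 : p.2 ∈ Icc (0:ℝ) (a/2)).1)
    have h2 : ContinuousOn (fun p : ℝ × ℝ => H p.1) (Icc a b ×ˢ Icc (0:ℝ) (a/2)) :=
      hHcont.comp continuous_fst.continuousOn
        (fun p hp => le_of_lt (lt_of_lt_of_le ha (hp.1 : p.1 ∈ Icc a b).1))
    have h3 : ContinuousOn (fun p : ℝ × ℝ => H₁ p.1) (Icc a b ×ˢ Icc (0:ℝ) (a/2)) :=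
      hH1cont.comp continuous_fst.continuousOn
        (fun p hp => lt_of_lt_of_le ha (hp.1 : p.1 ∈ Icc a b).1)
    exact (h1.sub h2).sub (h3.mul ((continuous_snd.sub continuous_fst).continuousOn))
  obtain ⟨p₀, hp₀mem, hp₀min⟩ := hKcomp.exists_isMinOn hKne hEcont
  obtain ⟨ht₀, hs₀⟩ := hp₀mem
  have ht₀0 : (0:ℝ) < p₀.1 := lt_of_lt_of_le ha ht₀.1
  have hδpos : 0 < E p₀ := by
    have hgd : ∀ x ∈ Ioi (0:ℝ),
        HasDerivAt (fun s => H s - H p₀.1 - H₁ p₀.1 * (s - p₀.1)) (H₁ x - H₁ p₀.1) x := by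
      intro x hx
      have h2 : HasDerivAt (fun s : ℝ => H₁ p₀.1 * (s - p₀.1)) (H₁ p₀.1) x := by
        simpa using ((hasDerivAt_id x).sub_const p₀.1).const_mul (H₁ p₀.1)
      exact ((hHd x hx).sub_const (H p₀.1)).sub h2
    have hanti : AntitoneOn (fun s => H s - H p₀.1 - H₁ p₀.1 * (s - p₀.1)) (Icc 0 p₀.1) := by
      apply antitoneOn_of_deriv_nonpos (convex_Icc _ _) ?_ ?_ ?_
      · exact ((hHcont.mono (fun z hz => hz.1)).sub continuousOn_const).sub
          ((continuous_const.mul (continuous_id.sub continuous_const)).continuousOn)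
      · rw [interior_Icc]
        exact fun x hx => ((hgd x hx.1).differentiableAt).differentiableWithinAt
      · rw [interior_Icc]
        intro x hx
        rw [(hgd x hx.1).deriv]
        have := hmono hx.1 (Set.mem_Ioi.mpr ht₀0) hx.2
        linarith
    have hstep : E p₀ ≥ H (a/2) - H p₀.1 - H₁ p₀.1 * (a/2 - p₀.1) := by
      have := hanti ⟨hs₀.1, le_trans hs₀.2 (by linarith [ht₀.1])⟩
        ⟨by linarith, by linarith [ht₀.1]⟩ hs₀.2
      simpa [hEdef] using this
    have hK1 := K1 p₀.1 ht₀ (a/2) ⟨le_rfl, by linarith⟩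
    have h6 : 0 ≤ p₀.1 * (p₀.1 - a) := mul_nonneg (le_of_lt ht₀0) (by linarith [ht₀.1])
    have h7 : c₂/2*(a/2)^2 ≤ c₂/2*(a/2 - p₀.1)^2 := by nlinarith [mul_nonneg (le_of_lt hc₂pos) h6]
    have h8 : 0 < c₂/2*(a/2)^2 := by positivity
    exact lt_of_lt_of_le h8 (h7.trans (hK1.trans hstep.le))
  have K2 : ∀ t ∈ Icc a b, ∀ s ∈ Icc (0:ℝ) (a/2),
      E p₀ ≤ H s - H t - H₁ t * (s - t) := by
    intro t ht s hs
    exact hp₀min (show (t, s) ∈ Icc a b ×ˢ Icc (0:ℝ) (a/2) from ⟨ht, hs⟩)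
  clear_value E
  -- large values
  set κ : ℝ := H₁ (2*b) - H₁ b with hκdef
  have hκpos : 0 < κ := by
    have := hmono (Set.mem_Ioi.mpr hb) (Set.mem_Ioi.mpr (show (0:ℝ) < 2*b by linarith))
      (show b < 2*b by linarith)
    simpa [hκdef, sub_pos] using this
  clear_value κ
  have K3 : ∀ t ∈ Icc a b, ∀ s : ℝ, 2*b ≤ s →
      c₂/2 * b^2 + κ * (s - 2*b) ≤ H s - H t - H₁ t * (s - t) := by
    intro t ht s hs
    have ht0 : (0:ℝ) < t := lt_of_lt_of_le ha ht.1
    have hGd : ∀ x ∈ Ioi (0:ℝ),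
        HasDerivAt (fun u => H u - H₁ t * u - κ * u) (H₁ x - H₁ t - κ) x := by
      intro x hx
      have h2 : HasDerivAt (fun u : ℝ => H₁ t * u) (H₁ t) x := by
        simpa using (hasDerivAt_id x).const_mul (H₁ t)
      have h3 : HasDerivAt (fun u : ℝ => κ * u) κ x := by
        simpa using (hasDerivAt_id x).const_mul κ
      exact ((hHd x hx).sub h2).sub h3
    have hmonoG : MonotoneOn (fun u => H u - H₁ t * u - κ * u) (Ici (2*b)) := by
      apply monotoneOn_of_deriv_nonneg (convex_Ici _) ?_ ?_ ?_
      · exact ((hHcont.mono (fun z (hz : z ∈ Ici (2*b)) => le_trans (by linarith : (0:ℝ) ≤ 2*b) hz)).sub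
          ((continuous_const.mul continuous_id).continuousOn)).sub
          ((continuous_const.mul continuous_id).continuousOn)
      · rw [interior_Ici]
        exact fun x hx => ((hGd x ((show (0:ℝ) < 2*b by linarith).trans hx)).differentiableAt).differentiableWithinAt
      · rw [interior_Ici]
        intro x hx
        rw [(hGd x ((show (0:ℝ) < 2*b by linarith).trans hx)).deriv]
        have h4 : H₁ (2*b) ≤ H₁ x :=
          le_of_lt (hmono (Set.mem_Ioi.mpr (show (0:ℝ) < 2*b by linarith))
            (Set.mem_Ioi.mpr ((show (0:ℝ) < 2*b by linarith).trans (Set.mem_Ioi.mp hx))) hx)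
        have h5 : H₁ t ≤ H₁ b := by
          rcases eq_or_lt_of_le ht.2 with h | h
          · rw [h]
          · exact le_of_lt (hmono (Set.mem_Ioi.mpr ht0) (Set.mem_Ioi.mpr hb) h)
        simp only [hκdef]
        linarith only [h4, h5]
    have hstep := hmonoG (Set.mem_Ici.mpr le_rfl) (Set.mem_Ici.mpr hs) hs
    simp only at hstep
    have hK1 := K1 t ht (2*b) ⟨by linarith, le_rfl⟩
    have h6 : b^2 ≤ (2*b - t)^2 := by nlinarith [ht.2, hb]
    have h7 : c₂/2*b^2 ≤ c₂/2*(2*b - t)^2 :=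
      mul_le_mul_of_nonneg_left h6 (by positivity)
    linarith only [hstep, hK1, h7]
  -- combine
  set c₃ : ℝ := min κ (c₂*b/4) with hc₃def
  have hc₃pos : 0 < c₃ := lt_min hκpos (by positivity)
  have hκ3 : c₃ ≤ κ := min_le_left _ _
  have hcb : c₃ ≤ c₂*b/4 := min_le_right _ _
  clear_value c₃
  refine ⟨min (min (c₂/2) (E p₀ / b^2)) c₃, lt_min (lt_min (by positivity) (by positivity)) hc₃pos, ?_⟩
  intro t ht s hs0
  rw [show (∫ z in (1:ℝ)..t, h z / z ^ 2) + h t / t = H₁ t from by rw [hH₁def]]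
  set c : ℝ := min (min (c₂/2) (E p₀ / b^2)) c₃ with hcdef
  have hmin_nonneg : 0 ≤ min ((s - t)^2) |s - t| := le_min (sq_nonneg _) (abs_nonneg _)
  have hcpos : 0 < c := lt_min (lt_min (by positivity) (by positivity)) hc₃pos
  have hcle1 : c ≤ c₂/2 := le_trans (min_le_left _ _) (min_le_left _ _)
  have hcle2 : c ≤ E p₀ / b^2 := le_trans (min_le_left _ _) (min_le_right _ _)
  have hcle3 : c ≤ c₃ := min_le_right _ _
  clear_value c
  rcases le_or_gt s (a/2) with h1 | h1
  · have hEb := K2 t ht s ⟨hs0, h1⟩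
    have h2 : (s - t)^2 ≤ b^2 := by nlinarith [ht.1, ht.2, ha, hs0, h1, hab]
    have h3 : c * min ((s - t)^2) |s - t| ≤ (E p₀ / b^2) * (s - t)^2 := by
      have hcle := hcle2
      calc c * min ((s - t)^2) |s - t| ≤ (E p₀ / b^2) * min ((s - t)^2) |s - t| :=
            mul_le_mul_of_nonneg_right hcle hmin_nonneg
        _ ≤ (E p₀ / b^2) * (s - t)^2 :=
            mul_le_mul_of_nonneg_left (min_le_left _ _) (by positivity)
    have h4 : (E p₀ / b^2) * (s - t)^2 ≤ E p₀ := by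
      rw [div_mul_eq_mul_div, div_le_iff₀ (by positivity)]
      exact mul_le_mul_of_nonneg_left h2 hδpos.le
    linarith only [h3, h4, hEb]
  · rcases le_or_gt s (2*b) with h2 | h2
    · have hEb := K1 t ht s ⟨le_of_lt h1, h2⟩
      have h3 : c * min ((s - t)^2) |s - t| ≤ (c₂/2) * (s - t)^2 := by
        have hcle := hcle1
        calc c * min ((s - t)^2) |s - t| ≤ (c₂/2) * min ((s - t)^2) |s - t| :=
              mul_le_mul_of_nonneg_right hcle hmin_nonneg
          _ ≤ (c₂/2) * (s - t)^2 :=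
              mul_le_mul_of_nonneg_left (min_le_left _ _) (by positivity)
      linarith only [h3, hEb]
    · have hEb := K3 t ht s (le_of_lt h2)
      have hst : 0 ≤ s - t := by linarith only [ht.2, h2, hb]
      have h3 : c * min ((s - t)^2) |s - t| ≤ c₃ * (s - t) := by
        have hc3 : c ≤ c₃ := hcle3
        have hmle : min ((s - t)^2) |s - t| ≤ s - t := by
          rw [abs_of_nonneg hst]
          exact min_le_right _ _
        calc c * min ((s - t)^2) |s - t| ≤ c₃ * min ((s - t)^2) |s - t| :=
              mul_le_mul_of_nonneg_right hc3 hmin_nonneg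
          _ ≤ c₃ * (s - t) := mul_le_mul_of_nonneg_left hmle hc₃pos.le
      have h4 : c₃ * (s - t) ≤ c₂/2 * b^2 + κ * (s - 2*b) := by
        have e1 : c₃ * (s - t) ≤ c₃ * s :=
          mul_le_mul_of_nonneg_left (by linarith only [ht.1, ha]) hc₃pos.le
        have e2 : c₃ * (s - 2*b) ≤ κ * (s - 2*b) :=
          mul_le_mul_of_nonneg_right hκ3 (by linarith only [h2])
        have e3 : c₃ * (2*b) ≤ (c₂*b/4) * (2*b) :=
          mul_le_mul_of_nonneg_right hcb (by linarith only [hb])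
        linarith only [e1, e2, e3]
      linarith only [h3, h4, hEb]

end MDCRE

/-- Fix `γ ∈ (1,∞)`, let `h` be an admissible monotone pressure for exponent `γ` with
pressure potential `H` (extended continuously to `r = 0`), and let `0 < a < b < ∞`.
Let `Ω ⊆ ℝ³` be a measurable set of finite positive Lebesgue measure. Then there
exists `C > 0`, depending only on `a, b, γ, h` and the measure of `Ω`, such that
for every measurable `r : Ω → [a,b]` and every nonnegative measurable `ρ` with
`D := ∫_Ω (H (ρ x) − H (r x) − H′ (r x) * (ρ x − r x)) dx ≤ 1` (a Lebesgue integral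
of a nonnegative integrand), the averaged difference satisfies
`( (1/|Ω|) ∫_Ω (ρ x − r x) dx )² ≤ C * D`. -/
theorem mean_difference_controlled_by_relative_entropy
    (γ : ℝ) (hγ : 1 < γ)
    (h : ℝ → ℝ) (hh : AdmissibleMonotonePressure γ h)
    (H : ℝ → ℝ)
    (hH : ∀ r ∈ Set.Ioi (0 : ℝ), H r = r * ∫ z in (1 : ℝ)..r, h z / z ^ 2)
    (hH0 : Filter.Tendsto H (nhdsWithin 0 (Set.Ioi (0 : ℝ))) (nhds (H 0)))
    (a b : ℝ) (ha : 0 < a) (hab : a < b)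
    (Ω : Set (Fin 3 → ℝ)) (hΩ : MeasurableSet Ω)
    (hΩfin : volume Ω < ⊤) (hΩpos : 0 < volume Ω) :
    ∃ C : ℝ, 0 < C ∧
      ∀ r ρ : (Fin 3 → ℝ) → ℝ, Measurable r → Measurable ρ →
        (∀ x ∈ Ω, r x ∈ Set.Icc a b) → (∀ x ∈ Ω, 0 ≤ ρ x) →
        (∫⁻ x in Ω,
            ENNReal.ofReal (H (ρ x) - H (r x) - deriv H (r x) * (ρ x - r x))) ≤ 1 →
        ((volume Ω).toReal⁻¹ * ∫ x in Ω, (ρ x - r x)) ^ 2 ≤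
          C * (∫⁻ x in Ω,
            ENNReal.ofReal (H (ρ x) - H (r x) - deriv H (r x) * (ρ x - r x))).toReal := by
  obtain ⟨hc, hd2, h0, hpos, hinf⟩ := hh
  obtain ⟨c, hcpos, hptw⟩ := MDCRE.entropy_pointwise hc hd2 hpos hH hH0 ha hab
  set V : ℝ := (volume Ω).toReal with hVdef
  have hVpos : 0 < V := ENNReal.toReal_pos (ne_of_gt hΩpos) (ne_of_lt hΩfin)
  set K : ℝ := (V + 1 + 1/c)^2 with hKdef
  refine ⟨V⁻¹^2 * K / c, by positivity, ?_⟩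
  intro r ρ hr hρ hrab hρ0 hD1
  set D := (∫⁻ x in Ω, ENNReal.ofReal (H (ρ x) - H (r x) - deriv H (r x) * (ρ x - r x)))
    with hDdef
  have hDne : D ≠ ⊤ := ne_top_of_le_ne_top (by norm_num) hD1
  have hDt0 : (0:ℝ) ≤ D.toReal := ENNReal.toReal_nonneg
  have hDt1 : D.toReal ≤ 1 := by
    have := ENNReal.toReal_mono (by norm_num) hD1
    simpa using this
  by_cases hint : IntegrableOn (fun x => ρ x - r x) Ω volume
  swap
  · rw [integral_undef hint]
    simp only [mul_zero]
    rw [show ((0:ℝ))^2 = 0 by norm_num]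
    positivity
  · have key : ∀ x ∈ Ω, c * min ((ρ x - r x)^2) |ρ x - r x| ≤
        H (ρ x) - H (r x) - deriv H (r x) * (ρ x - r x) := by
      intro x hx
      have hrx : 0 < r x := lt_of_lt_of_le ha (hrab x hx).1
      rw [(MDCRE.hasDerivAt_H hc hH hrx).deriv]
      exact hptw (r x) (hrab x hx) (ρ x) (hρ0 x hx)
    set f : (Fin 3 → ℝ) → ℝ := fun x => ρ x - r x with hfdef
    set m : (Fin 3 → ℝ) → ℝ := fun x => min ((f x)^2) |f x| with hmdef
    have hmmeas : Measurable m := ((hρ.sub hr).pow_const 2).min (hρ.sub hr).abs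
    have hm0 : ∀ x, 0 ≤ m x := fun x => le_min (sq_nonneg _) (abs_nonneg _)
    have hmlef : ∀ x, m x ≤ |f x| := fun x => min_le_right _ _
    have hmint : IntegrableOn m Ω volume := by
      apply Integrable.mono hint.abs hmmeas.aestronglyMeasurable
      filter_upwards with x
      rw [Real.norm_eq_abs, Real.norm_eq_abs, abs_of_nonneg (hm0 x), abs_abs]
      exact hmlef x
    set M : ℝ := ∫ x in Ω, m x with hMdef
    have hM0 : (0:ℝ) ≤ M := integral_nonneg hm0
    have hcM : c * M ≤ D.toReal := by
      have h1 : ENNReal.ofReal (c * M) = ∫⁻ x in Ω, ENNReal.ofReal (c * m x) := by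
        rw [hMdef, ← integral_const_mul]
        exact ofReal_integral_eq_lintegral_ofReal (hmint.const_mul c)
          (Filter.Eventually.of_forall fun x => mul_nonneg hcpos.le (hm0 x))
      have h2 : (∫⁻ x in Ω, ENNReal.ofReal (c * m x)) ≤ D := by
        rw [hDdef]
        apply lintegral_mono_ae
        filter_upwards [ae_restrict_mem hΩ] with x hx
        exact ENNReal.ofReal_le_ofReal (key x hx)
      have h3 : ENNReal.ofReal (c * M) ≤ D := h1 ▸ h2
      calc c * M = (ENNReal.ofReal (c * M)).toReal :=
            (ENNReal.toReal_ofReal (mul_nonneg hcpos.le hM0)).symm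
        _ ≤ D.toReal := ENNReal.toReal_mono hDne h3
    have hMc : M ≤ D.toReal / c := (le_div_iff₀' hcpos).mpr hcM
    have hM1c : M ≤ 1 / c := (le_div_iff₀' hcpos).mpr (hcM.trans hDt1)
    set A : ℝ := ∫ x in Ω, |f x| with hAdef
    have hA0 : (0:ℝ) ≤ A := integral_nonneg fun x => abs_nonneg _
    have hfabs : |∫ x in Ω, f x| ≤ A := by
      rw [hAdef]
      calc |∫ x in Ω, f x| = ‖∫ x in Ω, f x‖ := (Real.norm_eq_abs _).symm
        _ ≤ ∫ x in Ω, ‖f x‖ := norm_integral_le_integral_norm _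
        _ = ∫ x in Ω, |f x| := by simp [Real.norm_eq_abs]
    have hsq : (∫ x in Ω, f x)^2 ≤ A^2 := by
      rw [← sq_abs (∫ x in Ω, f x)]
      exact pow_le_pow_left₀ (abs_nonneg _) hfabs 2
    -- main estimate : A^2 ≤ K * M
    have hAKM : A^2 ≤ K * M := by
      rcases eq_or_lt_of_le hM0 with hM | hM
      · -- M = 0 : then f = 0 a.e., A = 0
        have hmz : m =ᵐ[volume.restrict Ω] 0 :=
          (integral_eq_zero_iff_of_nonneg (fun x => hm0 x) hmint).mp hM.symm
        have hfz : (fun x => |f x|) =ᵐ[volume.restrict Ω] 0 := by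
          filter_upwards [hmz] with x hx
          by_contra hfx
          have hfx0 : f x ≠ 0 := fun hc0 => hfx (by simp [hc0])
          have h1 : 0 < |f x| := abs_pos.mpr hfx0
          have h2 : 0 < (f x)^2 := by positivity
          have := lt_min h2 h1
          rw [show min ((f x)^2) |f x| = m x from rfl, hx] at this
          exact lt_irrefl 0 this
        have : A = 0 := by
          rw [hAdef]
          exact integral_eq_zero_of_ae hfz
        rw [this, ← hM]
        norm_num
      · -- M > 0
        set ε : ℝ := min 1 (Real.sqrt M) with hεdef
        have hε0 : 0 < ε := lt_min one_pos (Real.sqrt_pos.mpr hM)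
        have hε1 : ε ≤ 1 := min_le_left _ _
        have hptw2 : ∀ x, |f x| ≤ ε + m x / ε := by
          intro x
          have hd0 : 0 ≤ m x / ε := div_nonneg (hm0 x) hε0.le
          rcases le_or_gt |f x| ε with h1 | h1
          · linarith only [h1, hd0]
          · rcases le_or_gt |f x| 1 with h2 | h2
            · have hsqle : (f x)^2 ≤ |f x| := by
                rw [← sq_abs, sq]
                calc |f x| * |f x| ≤ 1 * |f x| :=
                      mul_le_mul_of_nonneg_right h2 (abs_nonneg _)
                  _ = |f x| := one_mul _
              have hmx : m x = (f x)^2 := min_eq_left hsqle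
              have h3 : |f x| ≤ m x / ε := by
                rw [hmx, le_div_iff₀ hε0]
                calc |f x| * ε ≤ |f x| * |f x| :=
                      mul_le_mul_of_nonneg_left h1.le (abs_nonneg _)
                  _ = (f x)^2 := by rw [← sq_abs, sq]
              linarith only [h3, hε0.le]
            · have hlesq : |f x| ≤ (f x)^2 := by
                rw [← sq_abs, sq]
                exact le_mul_of_one_le_left (abs_nonneg _) h2.le
              have hmx : m x = |f x| := min_eq_right hlesq
              have h3 : |f x| ≤ m x / ε := by
                rw [hmx, le_div_iff₀ hε0]
                exact mul_le_of_le_one_right (abs_nonneg _) hε1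
              linarith only [h3, hε0.le]
        have hfin : IsFiniteMeasure (volume.restrict Ω) := by
          constructor
          rwa [Measure.restrict_apply_univ]
        have hconst : IntegrableOn (fun _ : Fin 3 → ℝ => ε) Ω volume := integrable_const ε
        have hAbound : A ≤ ε * V + M / ε := by
          have h1 : A ≤ ∫ x in Ω, (ε + m x / ε) := by
            apply integral_mono hint.abs (hconst.add (hmint.div_const ε))
            intro x
            exact hptw2 x
          have h2 : (∫ x in Ω, (ε + m x / ε)) = ε * V + M / ε := by
            rw [integral_add hconst (hmint.div_const ε), integral_div,
              setIntegral_const, smul_eq_mul, measureReal_def, ← hVdef, ← hMdef]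
            ring
          linarith only [h1, h2]
        rcases le_or_gt (Real.sqrt M) 1 with h1 | h1
        · have hεeq : ε = Real.sqrt M := min_eq_right h1
          have hA2 : A ≤ Real.sqrt M * (V + 1) := by
            rw [hεeq, Real.div_sqrt] at hAbound
            linarith only [hAbound]
          have h3 := pow_le_pow_left₀ hA0 hA2 2
          rw [mul_pow, Real.sq_sqrt hM0] at h3
          have h4 : (V+1)^2 ≤ (V + 1 + 1/c)^2 :=
            pow_le_pow_left₀ (by positivity) (by linarith only [one_div_pos.mpr hcpos]) 2
          calc A^2 ≤ M * (V+1)^2 := h3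
            _ ≤ M * K := by
              rw [hKdef]
              exact mul_le_mul_of_nonneg_left h4 hM.le
            _ = K * M := mul_comm _ _
        · have hεeq : ε = 1 := min_eq_left h1.le
          have hMgt1 : 1 < M := by
            have h6 : (1:ℝ)*1 < Real.sqrt M * Real.sqrt M :=
              mul_lt_mul'' h1 h1 zero_le_one zero_le_one
            rwa [one_mul, Real.mul_self_sqrt hM0] at h6
          have hA2 : A ≤ V + M := by
            rw [hεeq] at hAbound
            linarith only [hAbound]
          have hVM : V + M ≤ V + 1 + 1/c := by linarith only [hM1c]
          calc A^2 ≤ (V+M)^2 := pow_le_pow_left₀ hA0 hA2 2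
            _ ≤ (V + 1 + 1/c)^2 :=
              pow_le_pow_left₀ (by linarith only [hVpos, hM.le]) hVM 2
            _ = K := by rw [hKdef]
            _ ≤ K * M := le_mul_of_one_le_right (by positivity) hMgt1.le
    -- conclude
    have hfinal : (V⁻¹ * ∫ x in Ω, f x)^2 ≤ V⁻¹^2 * K / c * D.toReal := by
      have h1 : (V⁻¹ * ∫ x in Ω, f x)^2 = V⁻¹^2 * (∫ x in Ω, f x)^2 := by ring
      rw [h1]
      have h2 : (∫ x in Ω, f x)^2 ≤ K * (D.toReal / c) := by
        calc (∫ x in Ω, f x)^2 ≤ A^2 := hsq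
          _ ≤ K * M := hAKM
          _ ≤ K * (D.toReal / c) := mul_le_mul_of_nonneg_left hMc (by positivity)
      calc V⁻¹^2 * (∫ x in Ω, f x)^2 ≤ V⁻¹^2 * (K * (D.toReal / c)) :=
            mul_le_mul_of_nonneg_left h2 (by positivity)
        _ = V⁻¹^2 * K / c * D.toReal := by ring
    exact hfinal
end
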